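/- arXiv:2410.00446 — 5 statements merged into one kernel-verified Lean document; each statement's English description precedes it below -/
import Mathlib

section
/- For n ≥ 1, the solution of the recursion f(n,t) = e^{-(Λ(t)+M(t)n)} ∫₀ᵗ e^{Λ(s)+M(s)n}(λ(s)+μ(s)(n-1)) f(n-1,s) ds with f(0,t)=e^{-Λ(t)} satisfies 0 ≤ f(n,t) ≤ 1 for all n ∈ ℕ and t > 0. -/
open MeasureTheory Real Filter Set

private lemma glob_ii {g : ℝ → ℝ} {C : ℝ}
    (hm : AEStronglyMeasurable g volume) (hC : ∀ s, ‖g s‖ ≤ C) :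
    ∀ a b : ℝ, IntervalIntegrable g volume a b := by
  intro a b
  rw [intervalIntegrable_iff]
  have hfin : volume (Set.uIoc a b) < ⊤ := by rw [Set.uIoc]; exact measure_Ioc_lt_top
  refine Integrable.mono' (g := fun _ => C) (integrableOn_const hfin.ne)
    hm.restrict (Filter.Eventually.of_forall fun s => hC s)

private lemma mono_primitive {g : ℝ → ℝ}
    (hint : ∀ a b : ℝ, IntervalIntegrable g volume a b) (hnn : ∀ s, 0 ≤ g s) :
    Monotone fun x => ∫ s in (0:ℝ)..x, g s := by
  intro a b hab
  have h1 : (∫ s in (0:ℝ)..a, g s) + ∫ s in a..b, g s = ∫ s in (0:ℝ)..b, g s :=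
    intervalIntegral.integral_add_adjacent_intervals (hint 0 a) (hint a b)
  have h2 : 0 ≤ ∫ s in a..b, g s :=
    intervalIntegral.integral_nonneg hab fun u _ => hnn u
  simp only at h1 ⊢
  linarith

private lemma crux (h G : ℝ → ℝ) (hm : Measurable h) (hnn : ∀ s, 0 ≤ h s) (C : ℝ)
    (hb : ∀ s, h s ≤ C) (hG : ∀ x, G x = ∫ s in (0:ℝ)..x, h s) {t : ℝ} (ht : 0 ≤ t) :
    ∫ s in (0:ℝ)..t, Real.exp (G s) * h s = Real.exp (G t) - 1 := by
  have hint : ∀ a b : ℝ, IntervalIntegrable h volume a b :=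
    glob_ii hm.aestronglyMeasurable
      (fun s => by rw [Real.norm_eq_abs, abs_of_nonneg (hnn s)]; exact hb s)
  have hGfun : G = fun x => ∫ s in (0:ℝ)..x, h s := funext hG
  have hGcont : Continuous G := by
    rw [hGfun]; exact intervalIntegral.continuous_primitive hint 0
  have hGmono : Monotone G := by rw [hGfun]; exact mono_primitive hint hnn
  have hG0 : G 0 = 0 := by rw [hG]; simp
  have hGt0 : 0 ≤ G t := hG0 ▸ hGmono ht
  have hGmeas : Measurable G := hGcont.measurable
  set ν : Measure ℝ :=
    (volume.restrict (Ioc (0:ℝ) t)).withDensity fun s => ENNReal.ofReal (h s) with hνdef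
  have hIocval : ∀ a : ℝ, 0 ≤ a → a ≤ t →
      (∫⁻ s in Ioc (0:ℝ) a, ENNReal.ofReal (h s)) = ENNReal.ofReal (G a) := by
    intro a h0a _
    have hi : IntegrableOn h (Ioc 0 a) := by
      have := intervalIntegrable_iff.1 (hint 0 a)
      rwa [Set.uIoc_of_le h0a] at this
    rw [← ofReal_integral_eq_lintegral_ofReal hi
      (Filter.Eventually.of_forall fun s => hnn s)]
    congr 1
    rw [hG, intervalIntegral.integral_of_le h0a]
  have hν_apply : ∀ s : Set ℝ, MeasurableSet s →
      ν s = ∫⁻ x in s ∩ Ioc (0:ℝ) t, ENNReal.ofReal (h x) := by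
    intro s hs
    rw [hνdef, withDensity_apply _ hs, Measure.restrict_restrict hs]
  have hνfin : IsFiniteMeasure ν := by
    constructor
    rw [hν_apply univ MeasurableSet.univ, Set.univ_inter, hIocval t ht le_rfl]
    exact ENNReal.ofReal_lt_top
  have hmapfin : IsFiniteMeasure (ν.map G) := Measure.isFiniteMeasure_map ν G
  have hmap : ν.map G = volume.restrict (Ioc 0 (G t)) := by
    refine MeasureTheory.Measure.ext_of_Iic _ _ fun v => ?_
    rw [Measure.map_apply hGmeas measurableSet_Iic,
      hν_apply _ (hGmeas measurableSet_Iic), Measure.restrict_apply measurableSet_Iic]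
    rcases lt_or_ge v 0 with hv | hv
    · have h1 : G ⁻¹' Iic v ∩ Ioc 0 t = ∅ := by
        ext x
        simp only [Set.mem_inter_iff, Set.mem_preimage, Set.mem_Iic, Set.mem_Ioc,
          Set.mem_empty_iff_false, iff_false, not_and]
        intro hxv hx0
        exfalso
        have : (0:ℝ) ≤ G x := hG0 ▸ hGmono (le_of_lt hx0)
        linarith
      have h2 : Iic v ∩ Ioc 0 (G t) = ∅ := by
        ext x
        simp only [Set.mem_inter_iff, Set.mem_Iic, Set.mem_Ioc, Set.mem_empty_iff_false,
          iff_false, not_and]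
        intro hxv hx0
        exact absurd (hxv.trans_lt hv) (not_lt.2 hx0.le)
      rw [h1, h2]
      simp
    · set S : Set ℝ := Icc 0 t ∩ G ⁻¹' Iic v with hSdef
      have hSne : S.Nonempty := ⟨0, ⟨le_rfl, ht⟩, by simpa [hG0] using hv⟩
      have hScpt : IsCompact S :=
        isCompact_Icc.inter_right (isClosed_Iic.preimage hGcont)
      have hSbdd : BddAbove S := hScpt.bddAbove
      set c := sSup S with hcdef
      have hcS : c ∈ S := hScpt.sSup_mem hSne
      obtain ⟨⟨hc0, hct⟩, hcv⟩ := hcS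
      replace hcv : G c ≤ v := hcv
      have hseteq : G ⁻¹' Iic v ∩ Ioc 0 t = Ioc 0 c := by
        ext x
        simp only [Set.mem_inter_iff, Set.mem_preimage, Set.mem_Iic, Set.mem_Ioc]
        constructor
        · rintro ⟨hxv, hx0, hxt⟩
          exact ⟨hx0, le_csSup hSbdd ⟨⟨hx0.le, hxt⟩, hxv⟩⟩
        · rintro ⟨hx0, hxc⟩
          exact ⟨(hGmono hxc).trans hcv, hx0, hxc.trans hct⟩
      have hGc : G c = min v (G t) := by
        rcases le_or_gt (G t) v with hvt | hvt
        · have htS : t ∈ S := ⟨⟨ht, le_rfl⟩, hvt⟩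
          have : t ≤ c := le_csSup hSbdd htS
          rw [le_antisymm hct this, min_eq_right hvt]
        · rw [min_eq_left hvt.le]
          have hmem : v ∈ Icc (G 0) (G t) := by rw [hG0]; exact ⟨hv, hvt.le⟩
          obtain ⟨x, hx, hGx⟩ := intermediate_value_Icc ht hGcont.continuousOn hmem
          have hxc : x ≤ c := le_csSup hSbdd ⟨hx, hGx.le⟩
          exact le_antisymm hcv (hGx ▸ hGmono hxc)
      have h2 : Iic v ∩ Ioc 0 (G t) = Ioc 0 (min v (G t)) := by
        ext x
        simp only [Set.mem_inter_iff, Set.mem_Iic, Set.mem_Ioc, le_min_iff]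
        tauto
      rw [hseteq, hIocval c hc0 hct, hGc, h2, Real.volume_Ioc, sub_zero]
  have key : ∫ x, Real.exp (G x) ∂ν = Real.exp (G t) - 1 := by
    have h3 : ∫ y, Real.exp y ∂(ν.map G) = ∫ x, Real.exp (G x) ∂ν :=
      integral_map hGmeas.aemeasurable Real.continuous_exp.aestronglyMeasurable
    rw [← h3, hmap]
    rw [← intervalIntegral.integral_of_le hGt0]
    rw [integral_exp, Real.exp_zero]
  have hdens : ∫ x, Real.exp (G x) ∂ν
      = ∫ x in Ioc (0:ℝ) t, (h x).toNNReal • Real.exp (G x) := by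
    rw [hνdef]
    exact integral_withDensity_eq_integral_smul
      (f := fun x => (h x).toNNReal) hm.real_toNNReal _
  rw [intervalIntegral.integral_of_le ht, ← key, hdens]
  refine setIntegral_congr_fun measurableSet_Ioc fun x _ => ?_
  rw [NNReal.smul_def, Real.coe_toNNReal _ (hnn x), smul_eq_mul, mul_comm]

private lemma bdd_ii {g : ℝ → ℝ} {C : ℝ} {a b t : ℝ} (ha : 0 ≤ a) (hab : a ≤ b) (hbt : b ≤ t)
    (hm : AEStronglyMeasurable g (volume.restrict (Ioc a b)))
    (hC : ∀ s ∈ Icc (0:ℝ) t, ‖g s‖ ≤ C) : IntervalIntegrable g volume a b := by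
  rw [intervalIntegrable_iff, Set.uIoc_of_le hab]
  refine Integrable.mono' (g := fun _ => C)
    (integrableOn_const measure_Ioc_lt_top.ne) hm ?_
  rw [ae_restrict_iff' measurableSet_Ioc]
  exact Filter.Eventually.of_forall fun s hs => hC s ⟨ha.trans hs.1.le, hs.2.trans hbt⟩

/-- the recursively defined probabilities `f n t` satisfy `0 ≤ f n t ≤ 1`. -/
theorem stmt1 (lam mu : ℝ → ℝ) (f : ℕ → ℝ → ℝ)
    (hlam_nonneg : ∀ t, 0 ≤ lam t) (hmu_nonneg : ∀ t, 0 ≤ mu t)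
    (hlam_meas : Measurable lam) (hmu_meas : Measurable mu)
    (hlam_bdd : ∀ t > 0, ∃ C, ∀ s ∈ Set.Icc (0:ℝ) t, lam s ≤ C)
    (hmu_bdd : ∀ t > 0, ∃ C, ∀ s ∈ Set.Icc (0:ℝ) t, mu s ≤ C)
    (Λ M : ℝ → ℝ)
    (hΛ : ∀ t, Λ t = ∫ s in (0:ℝ)..t, lam s)
    (hM : ∀ t, M t = ∫ s in (0:ℝ)..t, mu s)
    (hf0 : ∀ t, f 0 t = Real.exp (-(Λ t)))
    (hfrec : ∀ (n : ℕ) (t : ℝ), f (n + 1) t =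
      Real.exp (-(Λ t + M t * (n + 1))) *
        ∫ s in (0:ℝ)..t,
          Real.exp (Λ s + M s * (n + 1)) * (lam s + mu s * n) * f n s) :
    ∀ (n : ℕ) (t : ℝ), 0 < t → 0 ≤ f n t ∧ f n t ≤ 1 := by
  -- indicator versions, globally well-behaved
  set lam' : ℝ → ℝ := (Set.Ici (0:ℝ)).indicator lam with hlam'def
  set mu' : ℝ → ℝ := (Set.Ici (0:ℝ)).indicator mu with hmu'def
  have hlam'_nn : ∀ s, 0 ≤ lam' s := fun s => Set.indicator_nonneg (fun x _ => hlam_nonneg x) s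
  have hmu'_nn : ∀ s, 0 ≤ mu' s := fun s => Set.indicator_nonneg (fun x _ => hmu_nonneg x) s
  have hlam'_meas : Measurable lam' := hlam_meas.indicator measurableSet_Ici
  have hmu'_meas : Measurable mu' := hmu_meas.indicator measurableSet_Ici
  have hind_ii : ∀ (g : ℝ → ℝ), Measurable g → (∀ s, 0 ≤ g s) →
      (∀ T > 0, ∃ C, ∀ s ∈ Set.Icc (0:ℝ) T, g s ≤ C) →
      ∀ a b : ℝ, IntervalIntegrable ((Set.Ici (0:ℝ)).indicator g) volume a b := by
    intro g hg hgnn hbdd a b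
    obtain ⟨C, hC⟩ := hbdd (max |a| |b| + 1) (by positivity)
    rw [intervalIntegrable_iff]
    have hfin : volume (Set.uIoc a b) < ⊤ := by rw [Set.uIoc]; exact measure_Ioc_lt_top
    refine Integrable.mono' (g := fun _ => max C 0) (integrableOn_const hfin.ne)
      (hg.indicator measurableSet_Ici).aestronglyMeasurable.restrict ?_
    rw [ae_restrict_iff' measurableSet_uIoc]
    refine Filter.Eventually.of_forall fun s hs => ?_
    by_cases h0 : s ∈ Set.Ici (0:ℝ)
    · rw [Set.indicator_of_mem h0, Real.norm_eq_abs, abs_of_nonneg (hgnn s)]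
      have hsle : s ≤ max a b := by
        rw [Set.uIoc] at hs; exact hs.2.trans (by simp)
      refine le_max_of_le_left (hC s ⟨h0, ?_⟩)
      have h1 : max a b ≤ max |a| |b| :=
        max_le_max (le_abs_self a) (le_abs_self b)
      linarith
    · rw [Set.indicator_of_notMem h0, norm_zero]
      exact le_max_right _ _
  have hlam'_ii := hind_ii lam hlam_meas hlam_nonneg hlam_bdd
  have hmu'_ii := hind_ii mu hmu_meas hmu_nonneg hmu_bdd
  set L : ℝ → ℝ := fun x => ∫ s in (0:ℝ)..x, lam' s with hLdef
  set Mm : ℝ → ℝ := fun x => ∫ s in (0:ℝ)..x, mu' s with hMmdef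
  have hLcont : Continuous L := intervalIntegral.continuous_primitive hlam'_ii 0
  have hMmcont : Continuous Mm := intervalIntegral.continuous_primitive hmu'_ii 0
  have hLmono : Monotone L := mono_primitive hlam'_ii hlam'_nn
  have hMmmono : Monotone Mm := mono_primitive hmu'_ii hmu'_nn
  have hLeq : ∀ t : ℝ, 0 ≤ t → Λ t = L t := by
    intro t ht
    rw [hΛ t, hLdef]
    refine intervalIntegral.integral_congr fun s hs => ?_
    rw [Set.uIcc_of_le ht] at hs
    rw [hlam'def, Set.indicator_of_mem (Set.mem_Ici.2 hs.1)]
  have hMeq : ∀ t : ℝ, 0 ≤ t → M t = Mm t := by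
    intro t ht
    rw [hM t, hMmdef]
    refine intervalIntegral.integral_congr fun s hs => ?_
    rw [Set.uIcc_of_le ht] at hs
    rw [hmu'def, Set.indicator_of_mem (Set.mem_Ici.2 hs.1)]
  -- strengthened induction
  suffices H : ∀ n : ℕ, (∀ t : ℝ, 0 ≤ t → 0 ≤ f n t ∧ f n t ≤ 1) ∧
      AEStronglyMeasurable (f n) (volume.restrict (Set.Ioi 0)) by
    intro n t ht; exact (H n).1 t ht.le
  intro n
  induction n with
  | zero =>
    have hΛnn : ∀ t : ℝ, 0 ≤ t → 0 ≤ Λ t := by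
      intro t ht
      rw [hΛ t]
      exact intervalIntegral.integral_nonneg ht fun u _ => hlam_nonneg u
    constructor
    · intro t ht
      rw [hf0]
      refine ⟨(Real.exp_pos _).le, ?_⟩
      rw [Real.exp_le_one_iff]
      linarith [hΛnn t ht]
    · refine AEStronglyMeasurable.congr
        ((Real.continuous_exp.comp hLcont.neg).aestronglyMeasurable
          (μ := volume.restrict (Set.Ioi 0))) ?_
      rw [Filter.EventuallyEq, ae_restrict_iff' measurableSet_Ioi]
      refine Filter.Eventually.of_forall fun t ht => ?_
      simp only [Function.comp, Pi.neg_apply]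
      rw [hf0, hLeq t (le_of_lt ht)]
  | succ n ih =>
    obtain ⟨ihb, ihm⟩ := ih
    have hbounds : ∀ t : ℝ, 0 ≤ t → 0 ≤ f (n+1) t ∧ f (n+1) t ≤ 1 := by
      intro t ht0
      rcases eq_or_lt_of_le ht0 with h0 | ht
      · rw [hfrec, ← h0, intervalIntegral.integral_same, mul_zero]
        exact ⟨le_rfl, zero_le_one⟩
      · obtain ⟨Cl, hCl⟩ := hlam_bdd t ht
        obtain ⟨Cm, hCm⟩ := hmu_bdd t ht
        have hCl0 : 0 ≤ Cl := (hlam_nonneg 0).trans (hCl 0 ⟨le_rfl, ht.le⟩)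
        have hCm0 : 0 ≤ Cm := (hmu_nonneg 0).trans (hCm 0 ⟨le_rfl, ht.le⟩)
        set c : ℝ := (n:ℝ) + 1 with hcdef
        have hc0 : (0:ℝ) ≤ c := by positivity
        set gbig : ℝ → ℝ := fun s => lam s + mu s * c with hgbigdef
        set h' : ℝ → ℝ := (Set.Icc (0:ℝ) t).indicator gbig with h'def
        have h'meas : Measurable h' :=
          (hlam_meas.add (hmu_meas.mul_const c)).indicator measurableSet_Icc
        have h'nn : ∀ s, 0 ≤ h' s := fun s => Set.indicator_nonneg
          (fun x _ => add_nonneg (hlam_nonneg x) (mul_nonneg (hmu_nonneg x) hc0)) s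
        have h'bd : ∀ s, h' s ≤ Cl + Cm * c := by
          intro s
          by_cases hsmem : s ∈ Set.Icc (0:ℝ) t
          · rw [h'def, Set.indicator_of_mem hsmem]
            exact add_le_add (hCl s hsmem) (mul_le_mul_of_nonneg_right (hCm s hsmem) hc0)
          · rw [h'def, Set.indicator_of_notMem hsmem]
            positivity
        set G : ℝ → ℝ := fun x => ∫ s in (0:ℝ)..x, h' s with hGdef
        have hcrux := crux h' G h'meas h'nn _ h'bd (fun x => rfl) ht.le
        have hlamII : ∀ s ∈ Set.Icc (0:ℝ) t, IntervalIntegrable lam volume 0 s := by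
          intro s hs
          refine bdd_ii (C := Cl) le_rfl hs.1 hs.2 hlam_meas.aestronglyMeasurable fun u hu => ?_
          rw [Real.norm_eq_abs, abs_of_nonneg (hlam_nonneg u)]
          exact hCl u hu
        have hmuII : ∀ s ∈ Set.Icc (0:ℝ) t, IntervalIntegrable mu volume 0 s := by
          intro s hs
          refine bdd_ii (C := Cm) le_rfl hs.1 hs.2 hmu_meas.aestronglyMeasurable fun u hu => ?_
          rw [Real.norm_eq_abs, abs_of_nonneg (hmu_nonneg u)]
          exact hCm u hu
        have hGs : ∀ s ∈ Set.Icc (0:ℝ) t, G s = Λ s + M s * c := by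
          intro s hs
          have h1 : G s = ∫ u in (0:ℝ)..s, gbig u := by
            simp only [hGdef]
            refine intervalIntegral.integral_congr fun u hu => ?_
            rw [Set.uIcc_of_le hs.1] at hu
            rw [h'def]
            exact Set.indicator_of_mem (show u ∈ Set.Icc (0:ℝ) t from ⟨hu.1, hu.2.trans hs.2⟩) _
          rw [h1, hgbigdef, intervalIntegral.integral_add (hlamII s hs)
            ((hmuII s hs).mul_const c), intervalIntegral.integral_mul_const, hΛ, hM]
        have hfAESM : AEStronglyMeasurable (f n) (volume.restrict (Set.Ioc 0 t)) :=
          ihm.mono_measure (Measure.restrict_mono Set.Ioc_subset_Ioi_self le_rfl)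
        set φ : ℝ → ℝ := fun s =>
          Real.exp (Λ s + M s * c) * (lam s + mu s * (n:ℝ)) * f n s with hφdef
        have hexpAESM : AEStronglyMeasurable (fun s => Real.exp (Λ s + M s * c))
            (volume.restrict (Set.Ioc 0 t)) := by
          have contLM : Continuous fun s => Real.exp (L s + Mm s * c) :=
            (hLcont.add (hMmcont.mul (continuous_const (y := c)))).rexp
          refine contLM.aestronglyMeasurable.congr ?_
          rw [Filter.EventuallyEq, ae_restrict_iff' measurableSet_Ioc]
          refine Filter.Eventually.of_forall fun s hs => ?_
          rw [hLeq s hs.1.le, hMeq s hs.1.le]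
        have hφAESM : AEStronglyMeasurable φ (volume.restrict (Set.Ioc 0 t)) :=
          (hexpAESM.mul ((hlam_meas.add (hmu_meas.mul_const _)).aestronglyMeasurable)).mul hfAESM
        have hexp_le : ∀ s ∈ Set.Icc (0:ℝ) t,
            Real.exp (Λ s + M s * c) ≤ Real.exp (L t + Mm t * c) := by
          intro s hs
          rw [hLeq s hs.1, hMeq s hs.1]
          exact Real.exp_le_exp.2 (add_le_add (hLmono hs.2)
            (mul_le_mul_of_nonneg_right (hMmmono hs.2) hc0))
        have hφbd : ∀ s ∈ Set.Icc (0:ℝ) t, ‖φ s‖ ≤ Real.exp (L t + Mm t * c) * (Cl + Cm * (n:ℝ)) := by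
          intro s hs
          obtain ⟨hf0s, hf1s⟩ := ihb s hs.1
          have hAnn : 0 ≤ lam s + mu s * (n:ℝ) :=
            add_nonneg (hlam_nonneg s) (mul_nonneg (hmu_nonneg s) n.cast_nonneg)
          have h2 : |f n s| ≤ 1 := abs_le.2 ⟨by linarith, hf1s⟩
          have h3 : lam s + mu s * (n:ℝ) ≤ Cl + Cm * (n:ℝ) :=
            add_le_add (hCl s hs) (mul_le_mul_of_nonneg_right (hCm s hs) n.cast_nonneg)
          simp only [hφdef]
          rw [Real.norm_eq_abs, abs_mul, abs_mul, abs_of_nonneg (Real.exp_pos _).le,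
            abs_of_nonneg hAnn]
          calc Real.exp (Λ s + M s * c) * (lam s + mu s * (n:ℝ)) * |f n s|
              ≤ Real.exp (Λ s + M s * c) * (lam s + mu s * (n:ℝ)) * 1 :=
                mul_le_mul_of_nonneg_left h2 (mul_nonneg (Real.exp_pos _).le hAnn)
            _ = Real.exp (Λ s + M s * c) * (lam s + mu s * (n:ℝ)) := mul_one _
            _ ≤ Real.exp (L t + Mm t * c) * (Cl + Cm * (n:ℝ)) :=
                mul_le_mul (hexp_le s hs) h3 hAnn (Real.exp_pos _).le
        have hφII : IntervalIntegrable φ volume 0 t := bdd_ii le_rfl ht.le le_rfl hφAESM hφbd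
        have h'II : ∀ a b : ℝ, IntervalIntegrable h' volume a b :=
          glob_ii h'meas.aestronglyMeasurable
            (fun s => by rw [Real.norm_eq_abs, abs_of_nonneg (h'nn s)]; exact h'bd s)
        have hGcont : Continuous G := by
          simp only [hGdef]; exact intervalIntegral.continuous_primitive h'II 0
        have hGmono : Monotone G := by
          simp only [hGdef]; exact mono_primitive h'II h'nn
        have hψII : IntervalIntegrable (fun s => Real.exp (G s) * h' s) volume 0 t := by
          refine bdd_ii le_rfl ht.le le_rfl
            ((hGcont.rexp).aestronglyMeasurable.mul h'meas.aestronglyMeasurable)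
            (C := Real.exp (G t) * (Cl + Cm * c)) fun s hs => ?_
          rw [Real.norm_eq_abs, abs_of_nonneg (mul_nonneg (Real.exp_pos _).le (h'nn s))]
          exact mul_le_mul (Real.exp_le_exp.2 (hGmono hs.2)) (h'bd s) (h'nn s) (Real.exp_pos _).le
        have hmono : (∫ s in (0:ℝ)..t, φ s) ≤ ∫ s in (0:ℝ)..t, Real.exp (G s) * h' s := by
          refine intervalIntegral.integral_mono_on ht.le hφII hψII fun s hs => ?_
          obtain ⟨hf0s, hf1s⟩ := ihb s hs.1
          have hGseq := hGs s hs
          have hh's : h' s = lam s + mu s * c := Set.indicator_of_mem hs _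
          have hAnn : 0 ≤ lam s + mu s * (n:ℝ) :=
            add_nonneg (hlam_nonneg s) (mul_nonneg (hmu_nonneg s) n.cast_nonneg)
          calc φ s = Real.exp (G s) * ((lam s + mu s * (n:ℝ)) * f n s) := by
                simp only [hφdef]; rw [hGseq]; ring
            _ ≤ Real.exp (G s) * (lam s + mu s * c) := by
                refine mul_le_mul_of_nonneg_left ?_ (Real.exp_pos _).le
                calc (lam s + mu s * (n:ℝ)) * f n s ≤ (lam s + mu s * (n:ℝ)) * 1 :=
                      mul_le_mul_of_nonneg_left hf1s hAnn
                  _ = lam s + mu s * (n:ℝ) := mul_one _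
                  _ ≤ lam s + mu s * c := by nlinarith [hmu_nonneg s]
            _ = Real.exp (G s) * h' s := by rw [hh's]
        have hA0 : 0 ≤ ∫ s in (0:ℝ)..t, φ s := by
          refine intervalIntegral.integral_nonneg ht.le fun s hs => ?_
          simp only [hφdef]
          exact mul_nonneg (mul_nonneg (Real.exp_pos _).le
            (add_nonneg (hlam_nonneg s) (mul_nonneg (hmu_nonneg s) n.cast_nonneg)))
            (ihb s hs.1).1
        rw [hfrec]
        rw [show ((n:ℝ) + 1) = c from hcdef.symm]
        constructor
        · exact mul_nonneg (Real.exp_pos _).le hA0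
        · have hGt := hGs t ⟨ht.le, le_rfl⟩
          have heq : Real.exp (-(Λ t + M t * c)) * (Real.exp (G t) - 1)
              = 1 - Real.exp (-(Λ t + M t * c)) := by
            rw [hGt, mul_sub, ← Real.exp_add, neg_add_cancel, Real.exp_zero, mul_one]
          calc Real.exp (-(Λ t + M t * c)) * ∫ s in (0:ℝ)..t, φ s
              ≤ Real.exp (-(Λ t + M t * c)) * (Real.exp (G t) - 1) :=
                mul_le_mul_of_nonneg_left (hmono.trans (le_of_eq hcrux)) (Real.exp_pos _).le
            _ = 1 - Real.exp (-(Λ t + M t * c)) := heq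
            _ ≤ 1 := by linarith [Real.exp_pos (-(Λ t + M t * c))]
    refine ⟨hbounds, ?_⟩
    set c : ℝ := (n:ℝ) + 1 with hcdef
    have hc0 : (0:ℝ) ≤ c := by positivity
    set χ : ℝ → ℝ := fun s =>
      Real.exp (L s + Mm s * c) * (lam s + mu s * (n:ℝ)) * f n s with hχdef
    set ψ : ℝ → ℝ := (Set.Ioi (0:ℝ)).indicator χ with hψdef
    have contLM : Continuous fun s => Real.exp (L s + Mm s * c) :=
      (hLcont.add (hMmcont.mul (continuous_const (y := c)))).rexp
    have hχAESM : AEStronglyMeasurable χ (volume.restrict (Set.Ioi 0)) :=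
      (contLM.aestronglyMeasurable.mul
        ((hlam_meas.add (hmu_meas.mul_const _)).aestronglyMeasurable)).mul ihm
    have hψAESM : AEStronglyMeasurable ψ volume :=
      (aestronglyMeasurable_indicator_iff measurableSet_Ioi).2 hχAESM
    have hψII : ∀ a b : ℝ, IntervalIntegrable ψ volume a b := by
      intro a b
      set T : ℝ := max |a| |b| + 1 with hTdef
      have hT0 : 0 < T := by positivity
      obtain ⟨Cl, hCl⟩ := hlam_bdd T hT0
      obtain ⟨Cm, hCm⟩ := hmu_bdd T hT0
      have hCl0 : 0 ≤ Cl := (hlam_nonneg 0).trans (hCl 0 ⟨le_rfl, hT0.le⟩)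
      have hCm0 : 0 ≤ Cm := (hmu_nonneg 0).trans (hCm 0 ⟨le_rfl, hT0.le⟩)
      set K : ℝ := Real.exp (L T + Mm T * c) * (Cl + Cm * (n:ℝ)) with hKdef
      have hK0 : 0 ≤ K := mul_nonneg (Real.exp_pos _).le
        (add_nonneg hCl0 (mul_nonneg hCm0 n.cast_nonneg))
      rw [intervalIntegrable_iff]
      have hfin : volume (Set.uIoc a b) < ⊤ := by rw [Set.uIoc]; exact measure_Ioc_lt_top
      refine Integrable.mono' (g := fun _ => K) (integrableOn_const hfin.ne)
        hψAESM.restrict ?_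
      rw [ae_restrict_iff' measurableSet_uIoc]
      refine Filter.Eventually.of_forall fun s hs => ?_
      have hsT : s ≤ T := by
        rw [Set.uIoc] at hs
        have h1 : s ≤ a ⊔ b := hs.2
        have h2 : a ⊔ b ≤ max |a| |b| := max_le_max (le_abs_self a) (le_abs_self b)
        rw [hTdef]; push_cast; linarith
      by_cases h0 : s ∈ Set.Ioi (0:ℝ)
      · rw [hψdef, Set.indicator_of_mem h0]
        have hs0 : (0:ℝ) ≤ s := le_of_lt h0
        obtain ⟨hf0s, hf1s⟩ := ihb s hs0
        have hAnn : 0 ≤ lam s + mu s * (n:ℝ) :=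
          add_nonneg (hlam_nonneg s) (mul_nonneg (hmu_nonneg s) n.cast_nonneg)
        have h2 : |f n s| ≤ 1 := abs_le.2 ⟨by linarith, hf1s⟩
        have h3 : lam s + mu s * (n:ℝ) ≤ Cl + Cm * (n:ℝ) :=
          add_le_add (hCl s ⟨hs0, hsT⟩)
            (mul_le_mul_of_nonneg_right (hCm s ⟨hs0, hsT⟩) n.cast_nonneg)
        have hexp : Real.exp (L s + Mm s * c) ≤ Real.exp (L T + Mm T * c) :=
          Real.exp_le_exp.2 (add_le_add (hLmono hsT)
            (mul_le_mul_of_nonneg_right (hMmmono hsT) hc0))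
        simp only [hχdef]
        rw [Real.norm_eq_abs, abs_mul, abs_mul, abs_of_nonneg (Real.exp_pos _).le,
          abs_of_nonneg hAnn, hKdef]
        calc Real.exp (L s + Mm s * c) * (lam s + mu s * (n:ℝ)) * |f n s|
            ≤ Real.exp (L s + Mm s * c) * (lam s + mu s * (n:ℝ)) * 1 :=
              mul_le_mul_of_nonneg_left h2 (mul_nonneg (Real.exp_pos _).le hAnn)
          _ = Real.exp (L s + Mm s * c) * (lam s + mu s * (n:ℝ)) := mul_one _
          _ ≤ Real.exp (L T + Mm T * c) * (Cl + Cm * (n:ℝ)) :=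
              mul_le_mul hexp h3 hAnn (Real.exp_pos _).le
      · rw [hψdef, Set.indicator_of_notMem h0, norm_zero]
        exact hK0
    have hFcont : Continuous fun x => ∫ s in (0:ℝ)..x, ψ s :=
      intervalIntegral.continuous_primitive hψII 0
    have contOuter : Continuous fun x => Real.exp (-(L x + Mm x * c)) * ∫ s in (0:ℝ)..x, ψ s :=
      ((hLcont.add (hMmcont.mul (continuous_const (y := c)))).neg.rexp).mul hFcont
    refine contOuter.aestronglyMeasurable.congr ?_
    rw [Filter.EventuallyEq, ae_restrict_iff' measurableSet_Ioi]
    refine Filter.Eventually.of_forall fun t ht => ?_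
    have ht0 : (0:ℝ) ≤ t := le_of_lt ht
    rw [hfrec n t, show ((n:ℝ) + 1) = c from hcdef.symm, hLeq t ht0, hMeq t ht0]
    congr 1
    rw [intervalIntegral.integral_of_le ht0, intervalIntegral.integral_of_le ht0]
    refine setIntegral_congr_fun measurableSet_Ioc fun s hs => ?_
    rw [hψdef, Set.indicator_of_mem (Set.mem_Ioi.2 hs.1)]
    simp only [hχdef]
    rw [hLeq s hs.1.le, hMeq s hs.1.le]
end

section
/- For every n ≥ 1 and t > 0, the function f defined by f(0,t)=e^{-Λ(t)} and the recursion f(n,t) = e^{-(Λ(t)+M(t)n)} ∫₀ᵗ e^{Λ(s)+M(s)n}(λ(s)+μ(s)(n-1)) f(n-1,s) ds satisfies the bound f(n,t) ≤ e^{-Λ(t)} (Λ(t)+M(t)(n-1))ⁿ / n!. -/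
open MeasureTheory Real Filter Set

lemma integrableOn_of_bdd {g : ℝ → ℝ} (hg : Measurable g) (h0 : ∀ s, 0 ≤ g s)
    {t C : ℝ} (hC : ∀ s ∈ Set.Icc (0:ℝ) t, g s ≤ C) :
    IntegrableOn g (Set.Ioc 0 t) := by
  apply Integrable.mono' (integrable_const C) hg.aestronglyMeasurable.restrict
  filter_upwards [ae_restrict_mem measurableSet_Ioc] with s hs
  rw [Real.norm_eq_abs, abs_of_nonneg (h0 s)]
  exact hC s (Set.Ioc_subset_Icc_self hs)


lemma integrableOn_mul_pow_primitive {h : ℝ → ℝ} (hm : Measurable h) (h0 : ∀ s, 0 ≤ h s)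
    (hint : ∀ t, IntegrableOn h (Set.Ioc 0 t)) (k : ℕ) (t : ℝ) :
    IntegrableOn (fun s => h s * (∫ u in Set.Ioc (0:ℝ) s, h u) ^ k) (Set.Ioc 0 t) := by
  set H : ℝ → ℝ := fun r => ∫ u in Set.Ioc (0:ℝ) r, h u with hHdef
  have Hnonneg : ∀ s, 0 ≤ H s := fun s =>
    setIntegral_nonneg measurableSet_Ioc fun x _ => h0 x
  have Hmono : Monotone H := by
    intro a b hab
    exact setIntegral_mono_set (hint b) (Filter.Eventually.of_forall h0)
      ((Set.Ioc_subset_Ioc_right hab).eventuallyLE)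
  have Hmeas : Measurable H := Hmono.measurable
  apply Integrable.mono' ((hint t).const_mul (H t ^ k))
    ((hm.mul (Hmeas.pow_const k)).aestronglyMeasurable.restrict)
  filter_upwards [ae_restrict_mem measurableSet_Ioc] with s hs
  rw [Real.norm_eq_abs, Pi.mul_apply, abs_of_nonneg (mul_nonneg (h0 s) (pow_nonneg (Hnonneg s) k))]
  calc h s * H s ^ k ≤ h s * H t ^ k :=
        mul_le_mul_of_nonneg_left (pow_le_pow_left₀ (Hnonneg s) (Hmono hs.2) k) (h0 s)
    _ = H t ^ k * h s := mul_comm _ _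

lemma key_id {h : ℝ → ℝ} (hm : Measurable h) (h0 : ∀ s, 0 ≤ h s)
    (hint : ∀ t, IntegrableOn h (Set.Ioc 0 t)) {H : ℝ → ℝ}
    (hH : ∀ t, H t = ∫ s in Set.Ioc 0 t, h s) :
    ∀ (n : ℕ) (t : ℝ), 0 ≤ t →
      ((n:ℝ) + 1) * ∫ s in Set.Ioc 0 t, h s * H s ^ n = H t ^ (n + 1) := by
  have Hnonneg : ∀ s, 0 ≤ H s := by
    intro s; rw [hH]
    exact setIntegral_nonneg measurableSet_Ioc fun x _ => h0 x
  have Hmono : Monotone H := by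
    intro a b hab
    rw [hH, hH]
    exact setIntegral_mono_set (hint b) (Filter.Eventually.of_forall h0)
      ((Set.Ioc_subset_Ioc_right hab).eventuallyLE)
  have Hmeas : Measurable H := Hmono.measurable
  have hHInt : ∀ (k : ℕ) (t : ℝ), IntegrableOn (fun s => h s * H s ^ k) (Set.Ioc 0 t) := by
    intro k t
    apply Integrable.mono' ((hint t).const_mul (H t ^ k))
      ((hm.mul (Hmeas.pow_const k)).aestronglyMeasurable.restrict)
    filter_upwards [ae_restrict_mem measurableSet_Ioc] with s hs
    rw [Real.norm_eq_abs, Pi.mul_apply, abs_of_nonneg (mul_nonneg (h0 s) (pow_nonneg (Hnonneg s) k))]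
    calc h s * H s ^ k ≤ h s * H t ^ k := by
          exact mul_le_mul_of_nonneg_left
            (pow_le_pow_left₀ (Hnonneg s) (Hmono hs.2) k) (h0 s)
      _ = H t ^ k * h s := mul_comm _ _
  have hadd : ∀ (k : ℕ) (r t : ℝ), 0 ≤ r → r ≤ t →
      ∫ s in Set.Ioc r t, h s * H s ^ k
        = (∫ s in Set.Ioc 0 t, h s * H s ^ k) - ∫ s in Set.Ioc 0 r, h s * H s ^ k := by
    intro k r t hr hrt
    have hu : Set.Ioc (0:ℝ) r ∪ Set.Ioc r t = Set.Ioc 0 t := Set.Ioc_union_Ioc_eq_Ioc hr hrt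
    rw [← hu, setIntegral_union (Set.Ioc_disjoint_Ioc_of_le le_rfl) measurableSet_Ioc (hHInt k r) ?_]
    · ring
    · exact (hHInt k t).mono_set (Set.Ioc_subset_Ioc_left hr)
  intro n
  induction n with
  | zero =>
    intro t ht
    simp only [pow_zero, mul_one, Nat.cast_zero, zero_add, one_mul, pow_one]
    exact (hH t).symm
  | succ n IH =>
    intro t ht
    set S := Set.Ioc (0:ℝ) t with hS
    set c := H t with hc
    set I := ∫ s in S, h s * H s ^ (n+1) with hI
    -- Fubini setup
    set G : ℝ → ℝ → ℝ := fun s r => (h s * H s ^ n) * (Set.Iic s).indicator h r with hG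
    have hGint : Integrable (Function.uncurry G)
        ((volume.restrict S).prod (volume.restrict S)) := by
      have hmeasG : Measurable (Function.uncurry G) := by
        have heq : Function.uncurry G = fun p : ℝ × ℝ =>
            (h p.1 * H p.1 ^ n) * (if p.2 ≤ p.1 then h p.2 else 0) := by
          funext p
          simp [Function.uncurry, hG, Set.indicator_apply]
        rw [heq]
        exact ((hm.comp measurable_fst).mul ((Hmeas.comp measurable_fst).pow_const n)).mul
          (Measurable.ite (measurableSet_le measurable_snd measurable_fst)
            (hm.comp measurable_snd) measurable_const)
      have hbnd : Integrable (fun p : ℝ × ℝ => (h p.1 * H t ^ n) * h p.2)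
          ((volume.restrict S).prod (volume.restrict S)) :=
        Integrable.mul_prod ((hint t).mul_const (H t ^ n)) (hint t)
      apply Integrable.mono' hbnd hmeasG.aestronglyMeasurable
      rw [Measure.prod_restrict]
      filter_upwards [ae_restrict_mem (measurableSet_Ioc.prod measurableSet_Ioc)] with p hp
      obtain ⟨hp1, hp2⟩ := hp
      have hind : (Set.Iic p.1).indicator h p.2 ≤ h p.2 := by
        by_cases hc2 : p.2 ∈ Set.Iic p.1 <;> simp [Set.indicator_apply, hc2, h0 p.2]
      have hind0 : 0 ≤ (Set.Iic p.1).indicator h p.2 := by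
        by_cases hc2 : p.2 ∈ Set.Iic p.1 <;> simp [Set.indicator_apply, hc2, h0 p.2]
      have hGnn : 0 ≤ Function.uncurry G p :=
        mul_nonneg (mul_nonneg (h0 _) (pow_nonneg (Hnonneg _) n)) hind0
      rw [Real.norm_eq_abs, abs_of_nonneg hGnn]
      have h1 : h p.1 * H p.1 ^ n ≤ h p.1 * H t ^ n :=
        mul_le_mul_of_nonneg_left (pow_le_pow_left₀ (Hnonneg _) (Hmono hp1.2) n) (h0 _)
      exact mul_le_mul h1 hind hind0
        (mul_nonneg (h0 _) (pow_nonneg (Hnonneg _) n))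
    have step1 : I = ∫ s in S, ∫ r in S, G s r := by
      rw [hI]
      apply setIntegral_congr_fun measurableSet_Ioc
      intro s hs
      have hHs : H s = ∫ r in S, (Set.Iic s).indicator h r := by
        rw [setIntegral_indicator measurableSet_Iic, hH s]
        congr 1
        rw [hS, Set.Ioc_inter_Iic, min_eq_right hs.2]
      show h s * H s ^ (n+1) = ∫ r in S, (h s * H s ^ n) * (Set.Iic s).indicator h r
      rw [MeasureTheory.integral_const_mul, ← hHs, pow_succ]
      ring
    have step2 : (∫ s in S, ∫ r in S, G s r) = ∫ r in S, ∫ s in S, G s r :=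
      integral_integral_swap hGint
    have step3 : (∫ r in S, ∫ s in S, G s r)
        = ∫ r in S, (c ^ (n+1) - H r ^ (n+1)) / ((n:ℝ)+1) * h r := by
      apply setIntegral_congr_fun measurableSet_Ioc
      intro r hr
      have hptw : ∀ s, G s r = (Set.Ici r).indicator (fun s => (h s * H s ^ n) * h r) s := by
        intro s
        by_cases hrs : r ≤ s <;>
          simp [hG, Set.indicator_apply, hrs]
      have hset : S ∩ Set.Ici r = Set.Icc r t := by
        ext s
        simp only [hS, Set.mem_inter_iff, Set.mem_Ioc, Set.mem_Ici, Set.mem_Icc]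
        constructor
        · rintro ⟨⟨_, h2⟩, h3⟩; exact ⟨h3, h2⟩
        · rintro ⟨h1, h2⟩; exact ⟨⟨lt_of_lt_of_le hr.1 h1, h2⟩, h1⟩
      show (∫ s in S, G s r) = (c ^ (n+1) - H r ^ (n+1)) / ((n:ℝ)+1) * h r
      rw [show (fun s => G s r) = fun s => (Set.Ici r).indicator (fun s => (h s * H s ^ n) * h r) s
          from funext hptw]
      rw [setIntegral_indicator measurableSet_Ici, hset, integral_Icc_eq_integral_Ioc,
        integral_mul_const, hadd n r t hr.1.le hr.2]
      have h1 := IH t ht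
      have h2 := IH r hr.1.le
      have hn : ((n:ℝ)+1) ≠ 0 := by positivity
      have : (∫ s in Set.Ioc 0 t, h s * H s ^ n) - ∫ s in Set.Ioc 0 r, h s * H s ^ n
          = (c ^ (n+1) - H r ^ (n+1)) / ((n:ℝ)+1) := by
        rw [eq_div_iff hn]
        rw [hc]
        linarith
      rw [this]
    have step4 : (∫ r in S, (c ^ (n+1) - H r ^ (n+1)) / ((n:ℝ)+1) * h r)
        = (c ^ (n+2) - I) / ((n:ℝ)+1) := by
      have hptw : ∀ r, (c ^ (n+1) - H r ^ (n+1)) / ((n:ℝ)+1) * h r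
          = c ^ (n+1) / ((n:ℝ)+1) * h r - (1/((n:ℝ)+1)) * (h r * H r ^ (n+1)) := by
        intro r; ring
      simp_rw [hptw]
      rw [integral_sub ((hint t).const_mul _) ((hHInt (n+1) t).const_mul _),
        MeasureTheory.integral_const_mul, MeasureTheory.integral_const_mul, ← hH t]
      have hn : ((n:ℝ)+1) ≠ 0 := by positivity
      show c ^ (n+1) / ((n:ℝ)+1) * H t - 1/((n:ℝ)+1) * I = (c ^ (n+2) - I) / ((n:ℝ)+1)
      rw [← hc]
      field_simp
      ring
    have key : I = (c ^ (n+2) - I) / ((n:ℝ)+1) :=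
      step1.trans (step2.trans (step3.trans step4))
    have hn : (0:ℝ) < (n:ℝ)+1 := by positivity
    have key2 : ((n:ℝ)+1+1) * I = c ^ (n+2) := by
      rw [eq_div_iff (ne_of_gt hn)] at key
      linarith
    push_cast
    exact key2


/-- bound `f n t ≤ e^{-Λ(t)} (Λ(t)+M(t)(n-1))ⁿ / n!` for `n ≥ 1`, `t > 0`. -/
theorem stmt2 (lam mu : ℝ → ℝ) (f : ℕ → ℝ → ℝ)
    (hlam_nonneg : ∀ t, 0 ≤ lam t) (hmu_nonneg : ∀ t, 0 ≤ mu t)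
    (hlam_meas : Measurable lam) (hmu_meas : Measurable mu)
    (hlam_bdd : ∀ t > 0, ∃ C, ∀ s ∈ Set.Icc (0:ℝ) t, lam s ≤ C)
    (hmu_bdd : ∀ t > 0, ∃ C, ∀ s ∈ Set.Icc (0:ℝ) t, mu s ≤ C)
    (Λ M : ℝ → ℝ)
    (hΛ : ∀ t, Λ t = ∫ s in (0:ℝ)..t, lam s)
    (hM : ∀ t, M t = ∫ s in (0:ℝ)..t, mu s)
    (hf0 : ∀ t, f 0 t = Real.exp (-(Λ t)))
    (hfrec : ∀ (n : ℕ) (t : ℝ), f (n + 1) t =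
      Real.exp (-(Λ t + M t * (n + 1))) *
        ∫ s in (0:ℝ)..t,
          Real.exp (Λ s + M s * (n + 1)) * (lam s + mu s * n) * f n s) :
    ∀ (n : ℕ), 1 ≤ n → ∀ t > (0:ℝ),
      f n t ≤ Real.exp (-(Λ t)) * (Λ t + M t * ((n : ℝ) - 1)) ^ n / (n.factorial : ℝ) := by
  have hlamInt : ∀ t : ℝ, IntegrableOn lam (Set.Ioc 0 t) := by
    intro t
    rcases le_or_gt t 0 with h | h
    · rw [Set.Ioc_eq_empty (not_lt.mpr h)]; exact integrableOn_empty
    · obtain ⟨C, hC⟩ := hlam_bdd t h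
      exact integrableOn_of_bdd hlam_meas hlam_nonneg hC
  have hmuInt : ∀ t : ℝ, IntegrableOn mu (Set.Ioc 0 t) := by
    intro t
    rcases le_or_gt t 0 with h | h
    · rw [Set.Ioc_eq_empty (not_lt.mpr h)]; exact integrableOn_empty
    · obtain ⟨C, hC⟩ := hmu_bdd t h
      exact integrableOn_of_bdd hmu_meas hmu_nonneg hC
  have hΛ' : ∀ t : ℝ, 0 ≤ t → Λ t = ∫ s in Set.Ioc 0 t, lam s := by
    intro t ht; rw [hΛ t, intervalIntegral.integral_of_le ht]
  have hM' : ∀ t : ℝ, 0 ≤ t → M t = ∫ s in Set.Ioc 0 t, mu s := by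
    intro t ht; rw [hM t, intervalIntegral.integral_of_le ht]
  have hΛ0 : ∀ t : ℝ, 0 ≤ t → 0 ≤ Λ t := by
    intro t ht; rw [hΛ' t ht]
    exact setIntegral_nonneg measurableSet_Ioc fun x _ => hlam_nonneg x
  have hM0 : ∀ t : ℝ, 0 ≤ t → 0 ≤ M t := by
    intro t ht; rw [hM' t ht]
    exact setIntegral_nonneg measurableSet_Ioc fun x _ => hmu_nonneg x
  have hMmono : ∀ s t : ℝ, 0 ≤ s → s ≤ t → M s ≤ M t := by
    intro s t hs hst
    rw [hM' s hs, hM' t (hs.trans hst)]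
    exact setIntegral_mono_set (hmuInt t) (Filter.Eventually.of_forall hmu_nonneg)
      ((Set.Ioc_subset_Ioc_right hst).eventuallyLE)
  suffices P : ∀ (n : ℕ) (t : ℝ), 0 ≤ t →
      f n t ≤ Real.exp (-(Λ t)) * (Λ t + M t * ((n : ℝ) - 1)) ^ n / (n.factorial : ℝ) by
    intro n _ t ht; exact P n t ht.le
  intro n
  induction n with
  | zero => intro t _; simp [hf0]
  | succ n IH =>
    intro t ht
    set h : ℝ → ℝ := fun s => lam s + mu s * n with hh
    have hmeash : Measurable h := hlam_meas.add (hmu_meas.mul_const _)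
    have h0 : ∀ s, 0 ≤ h s := fun s =>
      add_nonneg (hlam_nonneg s) (mul_nonneg (hmu_nonneg s) (Nat.cast_nonneg n))
    have hinth : ∀ r : ℝ, IntegrableOn h (Set.Ioc 0 r) := fun r =>
      (hlamInt r).add ((hmuInt r).mul_const _)
    set H : ℝ → ℝ := fun r => ∫ s in Set.Ioc (0:ℝ) r, h s with hHdef
    have hHeq : ∀ r : ℝ, 0 ≤ r → H r = Λ r + M r * n := by
      intro r hr
      rw [hHdef]
      simp only
      rw [hh]
      rw [integral_add (hlamInt r) ((hmuInt r).mul_const _), integral_mul_const,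
        hΛ' r hr, hM' r hr]
    have key := key_id hmeash h0 hinth (fun _ => rfl) n t ht
    have hn1 : ((n:ℝ) + 1) ≠ 0 := by positivity
    have hkey : (∫ s in Set.Ioc (0:ℝ) t, h s * H s ^ n) = H t ^ (n+1) / ((n:ℝ)+1) := by
      rw [eq_div_iff hn1]; linarith [key]
    -- RHS nonneg pieces
    have hbase : (0:ℝ) ≤ Λ t + M t * ((↑(n+1) : ℝ) - 1) := by
      push_cast
      have := hΛ0 t ht
      have := hM0 t ht
      have : (0:ℝ) ≤ M t * n := mul_nonneg (hM0 t ht) (Nat.cast_nonneg n)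
      linarith [hΛ0 t ht]
    by_cases hφint : IntegrableOn
        (fun s => Real.exp (Λ s + M s * (↑n + 1)) * (lam s + mu s * ↑n) * f n s)
        (Set.Ioc 0 t)
    · -- integrable case
      have hψint : IntegrableOn
          (fun s => Real.exp (M t * (↑n + 1)) / (n.factorial : ℝ) * (h s * H s ^ n))
          (Set.Ioc 0 t) :=
        (integrableOn_mul_pow_primitive hmeash h0 hinth n t).const_mul _
      have hpt : ∀ s ∈ Set.Ioc (0:ℝ) t,
          Real.exp (Λ s + M s * (↑n + 1)) * (lam s + mu s * ↑n) * f n s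
            ≤ Real.exp (M t * (↑n + 1)) / (n.factorial : ℝ) * (h s * H s ^ n) := by
        intro s hs
        have hs0 : (0:ℝ) ≤ s := hs.1.le
        have IHs := IH s hs0
        have hA : (0:ℝ) ≤ Real.exp (Λ s + M s * (↑n + 1)) * (lam s + mu s * ↑n) :=
          mul_nonneg (Real.exp_nonneg _) (h0 s)
        have hpow : (Λ s + M s * ((n:ℝ) - 1)) ^ n ≤ (Λ s + M s * (n:ℝ)) ^ n := by
          cases n with
          | zero => simp
          | succ m =>
            apply pow_le_pow_left₀
            · push_cast
              have h1 := hΛ0 s hs0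
              have h2 : (0:ℝ) ≤ M s * m := mul_nonneg (hM0 s hs0) (Nat.cast_nonneg m)
              have : ((m:ℝ) + 1 - 1) = (m:ℝ) := by ring
              rw [this]
              linarith
            · have h3 : M s * ((((m:ℕ):ℝ)+1) - 1) ≤ M s * (((m:ℕ):ℝ)+1) := by
                apply mul_le_mul_of_nonneg_left _ (hM0 s hs0)
                linarith
              push_cast
              push_cast at h3
              linarith
        have hexp1 : Real.exp (Λ s + M s * (↑n + 1)) * Real.exp (-(Λ s))
            = Real.exp (M s * (↑n + 1)) := by
          rw [← Real.exp_add]; congr 1; ring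
        have hfact : (0:ℝ) < (n.factorial : ℝ) := by
          exact_mod_cast Nat.factorial_pos n
        calc Real.exp (Λ s + M s * (↑n + 1)) * (lam s + mu s * ↑n) * f n s
            ≤ Real.exp (Λ s + M s * (↑n + 1)) * (lam s + mu s * ↑n) *
              (Real.exp (-(Λ s)) * (Λ s + M s * ((n:ℝ) - 1)) ^ n / (n.factorial : ℝ)) :=
              mul_le_mul_of_nonneg_left IHs hA
          _ = (Real.exp (Λ s + M s * (↑n + 1)) * Real.exp (-(Λ s))) *
                (h s * (Λ s + M s * ((n:ℝ) - 1)) ^ n) / (n.factorial : ℝ) := by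
              rw [hh]; ring
          _ = Real.exp (M s * (↑n + 1)) *
                (h s * (Λ s + M s * ((n:ℝ) - 1)) ^ n) / (n.factorial : ℝ) := by
              rw [hexp1]
          _ ≤ Real.exp (M t * (↑n + 1)) *
                (h s * (Λ s + M s * ((n:ℝ)) ) ^ n) / (n.factorial : ℝ) := by
              have hexp_le : Real.exp (M s * (↑n + 1)) ≤ Real.exp (M t * (↑n + 1)) :=
                Real.exp_le_exp.mpr
                  (mul_le_mul_of_nonneg_right (hMmono s t hs0 hs.2) (by positivity))
              have hpow1nn : (0:ℝ) ≤ (Λ s + M s * ((n:ℝ) - 1)) ^ n := by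
                cases n with
                | zero => simp
                | succ m =>
                  apply pow_nonneg
                  have h1 := hΛ0 s hs0
                  have h2 : (0:ℝ) ≤ M s * m := mul_nonneg (hM0 s hs0) (Nat.cast_nonneg m)
                  push_cast
                  have : ((m:ℝ) + 1 - 1) = (m:ℝ) := by ring
                  rw [this]
                  linarith
              have hnum : Real.exp (M s * (↑n + 1)) * (h s * (Λ s + M s * ((n:ℝ) - 1)) ^ n)
                  ≤ Real.exp (M t * (↑n + 1)) * (h s * (Λ s + M s * (n:ℝ)) ^ n) :=
                mul_le_mul hexp_le (mul_le_mul_of_nonneg_left hpow (h0 s))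
                  (mul_nonneg (h0 s) hpow1nn) (Real.exp_nonneg _)
              exact div_le_div_of_nonneg_right hnum hfact.le
          _ = Real.exp (M t * (↑n + 1)) / (n.factorial : ℝ) * (h s * H s ^ n) := by
              rw [hHeq s hs0]; ring
      have hmono := setIntegral_mono_on hφint hψint measurableSet_Ioc hpt
      have hψval : (∫ s in Set.Ioc (0:ℝ) t,
          Real.exp (M t * (↑n + 1)) / (n.factorial : ℝ) * (h s * H s ^ n))
          = Real.exp (M t * (↑n + 1)) / (n.factorial : ℝ) * (H t ^ (n+1) / ((n:ℝ)+1)) := by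
        rw [MeasureTheory.integral_const_mul, hkey]
      have hexp2 : Real.exp (-(Λ t + M t * (↑n + 1))) * Real.exp (M t * (↑n + 1))
          = Real.exp (-(Λ t)) := by
        rw [← Real.exp_add]; congr 1; ring
      calc f (n+1) t
          = Real.exp (-(Λ t + M t * (↑n + 1))) *
            ∫ s in Set.Ioc (0:ℝ) t,
              Real.exp (Λ s + M s * (↑n + 1)) * (lam s + mu s * ↑n) * f n s := by
            rw [hfrec n t, intervalIntegral.integral_of_le ht]
        _ ≤ Real.exp (-(Λ t + M t * (↑n + 1))) *
            ∫ s in Set.Ioc (0:ℝ) t,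
              Real.exp (M t * (↑n + 1)) / (n.factorial : ℝ) * (h s * H s ^ n) :=
            mul_le_mul_of_nonneg_left hmono (Real.exp_nonneg _)
        _ = (Real.exp (-(Λ t + M t * (↑n + 1))) * Real.exp (M t * (↑n + 1))) *
              (H t ^ (n+1) / (((n:ℝ)+1) * (n.factorial : ℝ))) := by
            rw [hψval]
            have hfac : ((n.factorial : ℝ)) ≠ 0 := by
              exact_mod_cast Nat.factorial_ne_zero n
            field_simp
            try ring
        _ = Real.exp (-(Λ t)) * (H t ^ (n+1) / (((n:ℝ)+1) * (n.factorial : ℝ))) := by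
            rw [hexp2]
        _ = Real.exp (-(Λ t)) * (Λ t + M t * ((↑(n+1) : ℝ) - 1)) ^ (n+1) /
              ((n+1).factorial : ℝ) := by
            rw [hHeq t ht]
            have hfac : ((n.factorial : ℝ)) ≠ 0 := by
              exact_mod_cast Nat.factorial_ne_zero n
            have hfac2 : (((n+1).factorial : ℝ)) ≠ 0 := by
              exact_mod_cast Nat.factorial_ne_zero (n+1)
            push_cast [Nat.factorial_succ]
            field_simp
            try ring
    · -- non-integrable case: the integral is zero
      rw [hfrec n t, intervalIntegral.integral_of_le ht, integral_undef hφint, mul_zero]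
      apply div_nonneg _ (Nat.cast_nonneg _)
      exact mul_nonneg (Real.exp_nonneg _) (pow_nonneg hbase _)
end

section
/- Let λ, μ ∈ L¹(ℝ₊) be nonnegative, m(t) = e^{M(t)} ∫₀ᵗ e^{-M(s)} λ(s) ds, and E(t) = e^{2M(t)} ∫₀ᵗ e^{-2M(s)} [ (2λ(s)+μ(s)) m(s) + λ(s) ] ds. Then E(t) converges as t→∞ to a finite limit E_∞ satisfying E_∞ ≤ e^{2M_∞}[(2Λ_∞+M_∞)e^{M_∞}+1]Λ_∞. -/
open MeasureTheory Real Filter Set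

private lemma contOn_prim (f : ℝ → ℝ) (hf : IntegrableOn f (Set.Ici (0:ℝ))) :
    ContinuousOn (fun t => ∫ s in (0:ℝ)..t, f s) (Set.Ici (0:ℝ)) := by
  intro t ht
  have hint : IntervalIntegrable f volume (min 0 0) (max 0 (t + 1)) := by
    apply (hf.mono_set ?_).intervalIntegrable
    intro x hx
    have h1 : min (min 0 0) (max 0 (t+1)) ≤ x := hx.1
    have : (0:ℝ) ≤ min (min 0 0) (max 0 (t+1)) := le_min (by simp) (le_max_left _ _)
    exact le_trans this h1
  have h1 := intervalIntegral.continuousWithinAt_primitive (f := f) (a := 0)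
    (b₀ := t) (b₁ := 0) (b₂ := t + 1) (measure_singleton t) hint
  apply h1.mono_of_mem_nhdsWithin
  have h2 : Set.Iic (t + 1) ∈ nhdsWithin t (Set.Ici (0:ℝ)) :=
    nhdsWithin_le_nhds (Iic_mem_nhds (by linarith [ht.out]))
  filter_upwards [h2, self_mem_nhdsWithin] with x hx hx'
  exact ⟨hx', hx⟩

/-- the energy `E(t)` converges as `t → ∞` to a finite limit `E_∞`
bounded by `e^{2M_∞}[(2Λ_∞+M_∞)e^{M_∞}+1]Λ_∞`. -/
theorem stmt5 (lam mu : ℝ → ℝ)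
    (hlam_nonneg : ∀ t, 0 ≤ lam t) (hmu_nonneg : ∀ t, 0 ≤ mu t)
    (hlam_int : IntegrableOn lam (Set.Ici (0:ℝ)))
    (hmu_int : IntegrableOn mu (Set.Ici (0:ℝ)))
    (M m E : ℝ → ℝ)
    (hM : ∀ t, M t = ∫ s in (0:ℝ)..t, mu s)
    (hm : ∀ t, m t = Real.exp (M t) * ∫ s in (0:ℝ)..t, Real.exp (-(M s)) * lam s)
    (hE : ∀ t, E t = Real.exp (2 * M t) *
      ∫ s in (0:ℝ)..t, Real.exp (-(2 * M s)) * ((2 * lam s + mu s) * m s + lam s))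
    (Minf Λinf Einf : ℝ)
    (hMinf : Minf = ∫ t in Set.Ici (0:ℝ), mu t)
    (hΛinf : Λinf = ∫ t in Set.Ici (0:ℝ), lam t)
    (hEinf : Einf = Real.exp (2 * Minf) *
      ∫ s in Set.Ici (0:ℝ), Real.exp (-(2 * M s)) * ((2 * lam s + mu s) * m s + lam s)) :
    Filter.Tendsto E Filter.atTop (nhds Einf)
      ∧ Einf ≤ Real.exp (2 * Minf) * ((2 * Λinf + Minf) * Real.exp Minf + 1) * Λinf := by
  -- interval integrability helper
  have hII : ∀ (f : ℝ → ℝ), IntegrableOn f (Set.Ici (0:ℝ)) → ∀ a b : ℝ, 0 ≤ a → 0 ≤ b →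
      IntervalIntegrable f volume a b := by
    intro f hf a b ha hb
    apply (hf.mono_set ?_).intervalIntegrable
    intro x hx
    exact le_trans (le_min ha hb) hx.1
  have hΛ0 : 0 ≤ Λinf := by
    rw [hΛinf]; exact setIntegral_nonneg measurableSet_Ici fun x _ => hlam_nonneg x
  have hM0' : 0 ≤ Minf := by
    rw [hMinf]; exact setIntegral_nonneg measurableSet_Ici fun x _ => hmu_nonneg x
  -- monotonicity and bounds on M
  have hMmono : ∀ s t : ℝ, 0 ≤ s → s ≤ t → M s ≤ M t := by
    intro s t hs hst
    rw [hM s, hM t, ← intervalIntegral.integral_add_adjacent_intervals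
      (hII mu hmu_int 0 s le_rfl hs) (hII mu hmu_int s t hs (hs.trans hst))]
    have h0 : 0 ≤ ∫ u in s..t, mu u :=
      intervalIntegral.integral_nonneg hst fun u _ => hmu_nonneg u
    linarith
  have hMnn : ∀ t : ℝ, 0 ≤ t → 0 ≤ M t := by
    intro t ht
    have := hMmono 0 t le_rfl ht
    simpa [hM 0] using this
  have hMleMinf : ∀ t : ℝ, 0 ≤ t → M t ≤ Minf := by
    intro t ht
    rw [hM t, intervalIntegral.integral_of_le ht, hMinf]
    refine setIntegral_mono_set hmu_int (ae_of_all _ hmu_nonneg) ?_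
    exact HasSubset.Subset.eventuallyLE fun x hx => le_of_lt hx.1
  have hMcont : ContinuousOn M (Set.Ici (0:ℝ)) :=
    (contOn_prim mu hmu_int).congr fun x _ => hM x
  -- m : integrability of its integrand, continuity, bounds
  have hf1_int : IntegrableOn (fun s => Real.exp (-(M s)) * lam s) (Set.Ici (0:ℝ)) := by
    refine Integrable.mono' hlam_int ?_ ?_
    · exact ((Real.continuous_exp.comp_continuousOn hMcont.neg).aestronglyMeasurable
        measurableSet_Ici).mul hlam_int.aestronglyMeasurable
    · filter_upwards [ae_restrict_mem measurableSet_Ici] with x hx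
      have h1 : Real.exp (-(M x)) ≤ 1 := Real.exp_le_one_iff.2 (neg_nonpos.2 (hMnn x hx))
      have h2 : (0:ℝ) ≤ Real.exp (-(M x)) * lam x :=
        mul_nonneg (Real.exp_pos _).le (hlam_nonneg x)
      rw [Real.norm_eq_abs, abs_of_nonneg h2]
      nlinarith [hlam_nonneg x]
  have hmcont : ContinuousOn m (Set.Ici (0:ℝ)) :=
    (((Real.continuous_exp.comp_continuousOn hMcont)).mul
      (contOn_prim _ hf1_int)).congr fun x _ => hm x
  have hmnn : ∀ s : ℝ, 0 ≤ s → 0 ≤ m s := by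
    intro s hs
    rw [hm s]
    refine mul_nonneg (Real.exp_pos _).le ?_
    exact intervalIntegral.integral_nonneg hs fun u _ =>
      mul_nonneg (Real.exp_pos _).le (hlam_nonneg u)
  have hmle : ∀ s : ℝ, 0 ≤ s → m s ≤ Real.exp Minf * Λinf := by
    intro s hs
    rw [hm s]
    have h4 : 0 ≤ ∫ u in (0:ℝ)..s, Real.exp (-(M u)) * lam u :=
      intervalIntegral.integral_nonneg hs fun u _ =>
        mul_nonneg (Real.exp_pos _).le (hlam_nonneg u)
    have h1 : (∫ u in (0:ℝ)..s, Real.exp (-(M u)) * lam u) ≤ ∫ u in (0:ℝ)..s, lam u := by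
      refine intervalIntegral.integral_mono_on hs (hII _ hf1_int 0 s le_rfl hs)
        (hII lam hlam_int 0 s le_rfl hs) fun u hu => ?_
      have h1 : Real.exp (-(M u)) ≤ 1 := Real.exp_le_one_iff.2 (neg_nonpos.2 (hMnn u hu.1))
      nlinarith [hlam_nonneg u, (Real.exp_pos (-(M u))).le]
    have h2 : (∫ u in (0:ℝ)..s, lam u) ≤ Λinf := by
      rw [intervalIntegral.integral_of_le hs, hΛinf]
      refine setIntegral_mono_set hlam_int (ae_of_all _ hlam_nonneg) ?_
      exact HasSubset.Subset.eventuallyLE fun x hx => le_of_lt hx.1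
    have h3 : Real.exp (M s) ≤ Real.exp Minf := Real.exp_le_exp.2 (hMleMinf s hs)
    exact mul_le_mul h3 (h1.trans h2) h4 (Real.exp_pos _).le
  -- the integrand of E and its dominating function
  set g : ℝ → ℝ := fun s => Real.exp (-(2 * M s)) * ((2 * lam s + mu s) * m s + lam s) with hg
  set h : ℝ → ℝ := fun s => (2 * lam s + mu s) * (Real.exp Minf * Λinf) + lam s with hh
  have hC : 0 ≤ Real.exp Minf * Λinf := mul_nonneg (Real.exp_pos _).le hΛ0
  have hh_int : IntegrableOn h (Set.Ici (0:ℝ)) :=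
    (((hlam_int.const_mul 2).add hmu_int).mul_const _).add hlam_int
  have hg_meas : AEStronglyMeasurable g (volume.restrict (Set.Ici (0:ℝ))) := by
    refine AEStronglyMeasurable.mul ?_ ?_
    · exact (Real.continuous_exp.comp_continuousOn
        ((continuousOn_const.mul hMcont).neg)).aestronglyMeasurable measurableSet_Ici
    · exact (((hlam_int.aestronglyMeasurable.const_mul 2).add
        hmu_int.aestronglyMeasurable).mul
        (hmcont.aestronglyMeasurable measurableSet_Ici)).add hlam_int.aestronglyMeasurable
  have hgle : ∀ s ∈ Set.Ici (0:ℝ), g s ≤ h s := by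
    intro s hs
    have h1 : Real.exp (-(2 * M s)) ≤ 1 :=
      Real.exp_le_one_iff.2 (by nlinarith [hMnn s hs])
    have h2 := hmle s hs
    have h3 := hmnn s hs
    have h4 := hlam_nonneg s
    have h5 := hmu_nonneg s
    have h6 := (Real.exp_pos (-(2 * M s))).le
    have hcoef : (0:ℝ) ≤ 2 * lam s + mu s := by linarith
    have hX0 : (0:ℝ) ≤ (2 * lam s + mu s) * m s + lam s :=
      add_nonneg (mul_nonneg hcoef h3) h4
    simp only [hg, hh]
    calc Real.exp (-(2 * M s)) * ((2 * lam s + mu s) * m s + lam s)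
        ≤ 1 * ((2 * lam s + mu s) * m s + lam s) := mul_le_mul_of_nonneg_right h1 hX0
      _ = (2 * lam s + mu s) * m s + lam s := one_mul _
      _ ≤ (2 * lam s + mu s) * (Real.exp Minf * Λinf) + lam s := by
          have := mul_le_mul_of_nonneg_left h2 hcoef
          linarith
  have hgnn : ∀ s ∈ Set.Ici (0:ℝ), 0 ≤ g s := by
    intro s hs
    have h3 := hmnn s hs
    have h4 := hlam_nonneg s
    have h5 := hmu_nonneg s
    have h6 := (Real.exp_pos (-(2 * M s))).le
    have hcoef : (0:ℝ) ≤ 2 * lam s + mu s := by linarith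
    simp only [hg]
    exact mul_nonneg h6 (add_nonneg (mul_nonneg hcoef h3) h4)
  have hg_int : IntegrableOn g (Set.Ici (0:ℝ)) := by
    refine Integrable.mono' hh_int hg_meas ?_
    filter_upwards [ae_restrict_mem measurableSet_Ici] with x hx
    rw [Real.norm_eq_abs, abs_of_nonneg (hgnn x hx)]
    exact hgle x hx
  -- convergence
  have hMt : Tendsto M atTop (nhds Minf) := by
    rw [hMinf, integral_Ici_eq_integral_Ioi]
    exact (intervalIntegral_tendsto_integral_Ioi 0
      (hmu_int.mono_set Ioi_subset_Ici_self) tendsto_id).congr fun t => (hM t).symm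
  have hIg : Tendsto (fun t => ∫ s in (0:ℝ)..t, g s) atTop
      (nhds (∫ s in Set.Ici (0:ℝ), g s)) := by
    rw [integral_Ici_eq_integral_Ioi]
    exact intervalIntegral_tendsto_integral_Ioi 0 (hg_int.mono_set Ioi_subset_Ici_self)
      tendsto_id
  have hEt : Tendsto E atTop (nhds Einf) := by
    have hexp : Tendsto (fun t => Real.exp (2 * M t)) atTop (nhds (Real.exp (2 * Minf))) :=
      (Real.continuous_exp.tendsto _).comp (hMt.const_mul 2)
    have := hexp.mul hIg
    rw [hEinf]
    exact this.congr fun t => (hE t).symm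
  refine ⟨hEt, ?_⟩
  -- the bound
  have hint_le : (∫ s in Set.Ici (0:ℝ), g s) ≤ ∫ s in Set.Ici (0:ℝ), h s :=
    setIntegral_mono_on hg_int hh_int measurableSet_Ici hgle
  have hhval : (∫ s in Set.Ici (0:ℝ), h s)
      = (2 * Λinf + Minf) * (Real.exp Minf * Λinf) + Λinf := by
    have hb : Integrable (fun s => 2 * lam s + mu s) (volume.restrict (Set.Ici (0:ℝ))) :=
      (hlam_int.const_mul 2).add hmu_int
    have ha : Integrable (fun s => (2 * lam s + mu s) * (Real.exp Minf * Λinf))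
        (volume.restrict (Set.Ici (0:ℝ))) := hb.mul_const _
    calc (∫ s in Set.Ici (0:ℝ), h s)
        = ∫ s in Set.Ici (0:ℝ), ((2 * lam s + mu s) * (Real.exp Minf * Λinf) + lam s) := rfl
      _ = (∫ s in Set.Ici (0:ℝ), (2 * lam s + mu s) * (Real.exp Minf * Λinf))
            + ∫ s in Set.Ici (0:ℝ), lam s := integral_add ha hlam_int
      _ = (∫ s in Set.Ici (0:ℝ), (2 * lam s + mu s)) * (Real.exp Minf * Λinf) + Λinf := by
            rw [integral_mul_const, ← hΛinf]
      _ = (2 * (∫ s in Set.Ici (0:ℝ), lam s) + ∫ s in Set.Ici (0:ℝ), mu s)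
            * (Real.exp Minf * Λinf) + Λinf := by
            rw [integral_add (hlam_int.const_mul 2) hmu_int, integral_const_mul]
      _ = (2 * Λinf + Minf) * (Real.exp Minf * Λinf) + Λinf := by rw [← hΛinf, ← hMinf]
  calc Einf = Real.exp (2 * Minf) * ∫ s in Set.Ici (0:ℝ), g s := hEinf
    _ ≤ Real.exp (2 * Minf) * ((2 * Λinf + Minf) * (Real.exp Minf * Λinf) + Λinf) := by
        rw [← hhval]
        exact mul_le_mul_of_nonneg_left hint_le (Real.exp_pos _).le
    _ = Real.exp (2 * Minf) * ((2 * Λinf + Minf) * Real.exp Minf + 1) * Λinf := by ring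
end

section
/- Assume λ ∉ L¹(ℝ₊) (i.e., Λ(t)→∞ as t→∞) and either μ ∈ L¹(ℝ₊) or μ constant. Then for every k ≥ 1, g_k(t) = (λ(t)+μ(t)(k−1)) f(k−1,t) is a probability density on ℝ₊: g_k ≥ 0 and ∫₀^∞ g_k(t) dt = 1. -/
open MeasureTheory Real Filter Set

/-- if `lam ∉ L¹(ℝ₊)` (i.e. `Λ(t) → ∞`) and either `mu ∈ L¹(ℝ₊)` or `mu`
is constant, then `g_k(t) = (lam t + mu t (k−1)) f(k−1,t)` is a probability density
on `ℝ₊` for every `k ≥ 1`. -/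
theorem stmt10 (lam mu : ℝ → ℝ) (f : ℕ → ℝ → ℝ)
    (hlam_nonneg : ∀ t, 0 ≤ lam t) (hmu_nonneg : ∀ t, 0 ≤ mu t)
    (hlam_meas : Measurable lam) (hmu_meas : Measurable mu)
    (hlam_bdd : ∀ t > 0, ∃ C, ∀ s ∈ Set.Icc (0:ℝ) t, lam s ≤ C)
    (hmu_bdd : ∀ t > 0, ∃ C, ∀ s ∈ Set.Icc (0:ℝ) t, mu s ≤ C)
    (hlam_nonint : Filter.Tendsto (fun t => ∫ s in (0:ℝ)..t, lam s)
      Filter.atTop Filter.atTop)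
    (hmu_cases : IntegrableOn mu (Set.Ici (0:ℝ)) ∨ ∃ c : ℝ, ∀ t, mu t = c)
    (hode : ∀ (n : ℕ) (t : ℝ), 0 ≤ t → HasDerivAt (f n)
      ((lam t + mu t * ((n : ℝ) - 1)) * (if n = 0 then 0 else f (n - 1) t)
        - (lam t + mu t * n) * f n t) t)
    (hinit0 : f 0 0 = 1) (hinit : ∀ n : ℕ, 1 ≤ n → f n 0 = 0)
    (hf_nonneg : ∀ (n : ℕ) (t : ℝ), 0 ≤ t → 0 ≤ f n t) :
    ∀ k : ℕ, 1 ≤ k →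
      (∀ t : ℝ, 0 ≤ t → 0 ≤ (lam t + mu t * ((k : ℝ) - 1)) * f (k - 1) t)
      ∧ ∫ t in Set.Ici (0:ℝ), (lam t + mu t * ((k : ℝ) - 1)) * f (k - 1) t = 1 := by
  clear hmu_cases
  set g : ℕ → ℝ → ℝ := fun n t => (lam t + mu t * n) * f n t with hg_def
  set F : ℕ → ℝ → ℝ := fun k t => ∑ n ∈ Finset.range k, f n t with hF_def
  have hg_nonneg : ∀ n : ℕ, ∀ t : ℝ, 0 ≤ t → 0 ≤ g n t := by
    intro n t ht
    have := hlam_nonneg t; have := hmu_nonneg t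
    exact mul_nonneg (by positivity) (hf_nonneg n t ht)
  have hF_nonneg : ∀ k : ℕ, ∀ t : ℝ, 0 ≤ t → 0 ≤ F k t := by
    intro k t ht
    exact Finset.sum_nonneg fun n _ => hf_nonneg n t ht
  have hf_cont : ∀ n : ℕ, ContinuousOn (f n) (Ici 0) := by
    intro n t ht
    exact ((hode n t ht).continuousAt).continuousWithinAt
  have hg_int : ∀ (n : ℕ) (T : ℝ), 0 ≤ T → IntegrableOn (g n) (Ioc 0 T) := by
    intro n T hT
    rcases hT.eq_or_lt with h | h
    · simp [← h]
    obtain ⟨C1, hC1⟩ := hlam_bdd T h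
    obtain ⟨C2, hC2⟩ := hmu_bdd T h
    obtain ⟨Cf, hCf⟩ := IsCompact.exists_bound_of_continuousOn
      (isCompact_Icc (a := (0:ℝ)) (b := T))
      ((hf_cont n).mono (Icc_subset_Ici_self))
    have hmeas : AEStronglyMeasurable (g n) (volume.restrict (Ioc 0 T)) := by
      have hfm : AEMeasurable (f n) (volume.restrict (Ioc 0 T)) := by
        refine AEMeasurable.mono_measure ?_
          (Measure.restrict_mono Ioc_subset_Icc_self le_rfl)
        exact ((hf_cont n).mono Icc_subset_Ici_self).aemeasurable measurableSet_Icc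
      exact (aestronglyMeasurable_iff_aemeasurable).mpr
        (((hlam_meas.aemeasurable.add (hmu_meas.aemeasurable.mul_const _))).mul hfm)
    refine Integrable.mono' (g := fun _ => (C1 + C2 * n) * Cf)
      (integrableOn_const measure_Ioc_lt_top.ne) hmeas ?_
    filter_upwards [ae_restrict_mem measurableSet_Ioc] with t ht
    have ht' : t ∈ Icc (0:ℝ) T := Ioc_subset_Icc_self ht
    have h1 : lam t + mu t * n ≤ C1 + C2 * n := by
      have := hC1 t ht'
      have := hC2 t ht'
      have hn : (0:ℝ) ≤ n := Nat.cast_nonneg n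
      nlinarith
    have h0 : 0 ≤ lam t + mu t * n := by
      have := hlam_nonneg t; have := hmu_nonneg t; positivity
    calc ‖g n t‖ = (lam t + mu t * n) * ‖f n t‖ := by
          simp [hg_def, abs_mul, abs_of_nonneg h0]
      _ ≤ (C1 + C2 * n) * Cf := by
          refine mul_le_mul h1 (hCf t ht') (norm_nonneg _) ?_
          linarith [norm_nonneg (f n t), hCf t ht']
  have hg_ii : ∀ (n : ℕ) (T : ℝ), 0 ≤ T → IntervalIntegrable (g n) volume 0 T := by
    intro n T hT
    exact (intervalIntegrable_iff_integrableOn_Ioc_of_le hT).mpr (hg_int n T hT)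
  have hlam_ii : ∀ T : ℝ, 0 ≤ T → IntervalIntegrable lam volume 0 T := by
    intro T hT
    rcases hT.eq_or_lt with h | h
    · simp [← h]
    obtain ⟨C1, hC1⟩ := hlam_bdd T h
    rw [intervalIntegrable_iff_integrableOn_Ioc_of_le hT]
    refine Integrable.mono' (g := fun _ => C1)
      (integrableOn_const measure_Ioc_lt_top.ne)
      (hlam_meas.aestronglyMeasurable.restrict) ?_
    filter_upwards [ae_restrict_mem measurableSet_Ioc] with t ht
    rw [Real.norm_eq_abs, abs_of_nonneg (hlam_nonneg t)]
    exact hC1 t (Ioc_subset_Icc_self ht)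
  have hFderiv : ∀ (k : ℕ) (t : ℝ), 0 ≤ t →
      HasDerivAt (F (k + 1)) (-(g k t)) t := by
    intro k
    induction k with
    | zero =>
      intro t ht
      have h := hode 0 t ht
      have heq : F 1 = f 0 := by
        funext t; simp [hF_def]
      rw [heq]
      convert h using 1
      simp [hg_def]
    | succ k ih =>
      intro t ht
      have h1 := ih t ht
      have h2 := hode (k + 1) t ht
      have heq : F (k + 2) = fun t => F (k + 1) t + f (k + 1) t := by
        funext t; simp [hF_def, Finset.sum_range_succ]
      rw [heq]
      have := h1.add h2
      convert this using 1
      · rfl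
      · rfl
      · rfl
      simp only [hg_def, Nat.add_sub_cancel, if_neg (Nat.succ_ne_zero k)]
      push_cast
      ring
  have hFTC : ∀ (k : ℕ) (T : ℝ), 0 ≤ T →
      ∫ s in (0:ℝ)..T, g k s = 1 - F (k + 1) T := by
    intro k T hT
    have hderiv : ∀ t ∈ uIcc (0:ℝ) T, HasDerivAt (F (k + 1)) (-(g k t)) t := by
      intro t ht
      rw [uIcc_of_le hT] at ht
      exact hFderiv k t ht.1
    have hii : IntervalIntegrable (fun t => -(g k t)) volume 0 T := (hg_ii k T hT).neg
    have h := intervalIntegral.integral_eq_sub_of_hasDerivAt hderiv hii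
    rw [intervalIntegral.integral_neg] at h
    have hF0 : F (k + 1) 0 = 1 := by
      rw [hF_def]
      simp only
      rw [Finset.sum_eq_single_of_mem 0 (Finset.mem_range.mpr (Nat.succ_pos k))]
      · exact hinit0
      · intro n _ hn
        exact hinit n (Nat.one_le_iff_ne_zero.mpr hn)
    rw [hF0] at h
    linarith
  have hbdd : ∀ (k : ℕ) (T : ℝ), 0 ≤ T → ∫ s in (0:ℝ)..T, g k s ≤ 1 := by
    intro k T hT
    rw [hFTC k T hT]
    linarith [hF_nonneg (k + 1) T hT]
  have hIntIoi : ∀ k : ℕ, IntegrableOn (g k) (Ioi 0) := by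
    intro k
    refine integrableOn_Ioi_of_intervalIntegral_norm_bounded (f := g k)
      (b := fun T : ℝ => T) (l := atTop) 1 0 (fun T => ?_) tendsto_id ?_
    · rcases le_or_gt 0 T with h | h
      · exact hg_int k T h
      · simp [Ioc_eq_empty_of_le h.le]
    · filter_upwards [eventually_ge_atTop (0:ℝ)] with T hT
      have heq : ∫ s in (0:ℝ)..T, ‖g k s‖ = ∫ s in (0:ℝ)..T, g k s := by
        refine intervalIntegral.integral_congr fun s hs => ?_
        rw [uIcc_of_le hT] at hs
        exact abs_of_nonneg (hg_nonneg k s hs.1)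
      rw [heq]
      exact hbdd k T hT
  have hlim : ∀ k : ℕ, Tendsto (fun T => ∫ s in (0:ℝ)..T, g k s) atTop
      (nhds (∫ s in Ioi (0:ℝ), g k s)) := by
    intro k
    exact intervalIntegral_tendsto_integral_Ioi 0 (hIntIoi k) tendsto_id
  have hFlim : ∀ k : ℕ, Tendsto (F (k + 1)) atTop
      (nhds (1 - ∫ s in Ioi (0:ℝ), g k s)) := by
    intro k
    have h := (tendsto_const_nhds (α := ℝ) (f := atTop (α := ℝ)) (x := 1)).sub (hlim k)
    refine h.congr' ?_
    filter_upwards [eventually_ge_atTop (0:ℝ)] with T hT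
    rw [hFTC k T hT]
    ring
  have hFzero : ∀ k : ℕ, Tendsto (F k) atTop (nhds 0) := by
    intro k
    induction k with
    | zero =>
      have heq : F 0 = fun _ => (0:ℝ) := by funext t; simp [hF_def]
      rw [heq]; exact tendsto_const_nhds
    | succ k ih =>
      set L : ℝ := 1 - ∫ s in Ioi (0:ℝ), g k s with hL_def
      have hFk1 : Tendsto (F (k + 1)) atTop (nhds L) := hFlim k
      have hfk : Tendsto (f k) atTop (nhds L) := by
        have h := hFk1.sub ih
        rw [sub_zero] at h
        refine h.congr fun T => ?_
        simp [hF_def, Finset.sum_range_succ]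
      have hL_nonneg : 0 ≤ L := by
        refine ge_of_tendsto hfk ?_
        filter_upwards [eventually_ge_atTop (0:ℝ)] with T hT
        exact hf_nonneg k T hT
      have hL_zero : L = 0 := by
        by_contra hL
        have hLpos : 0 < L := lt_of_le_of_ne hL_nonneg (Ne.symm hL)
        have hev : ∀ᶠ T in atTop, L / 2 ≤ f k T ∧ (0:ℝ) ≤ T :=
          (hfk.eventually (eventually_ge_nhds (by linarith : L / 2 < L))).and
            (eventually_ge_atTop 0)
        obtain ⟨T0, hT0⟩ := eventually_atTop.mp hev
        have hT0_nonneg : (0:ℝ) ≤ T0 := (hT0 T0 le_rfl).2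
        have hkey : ∀ T : ℝ, T0 ≤ T → ∫ s in (0:ℝ)..T, lam s ≤
            (∫ s in (0:ℝ)..T0, lam s) + 2 / L := by
          intro T hT
          have hT_nonneg : (0:ℝ) ≤ T := hT0_nonneg.trans hT
          have hlam1 : IntervalIntegrable lam volume 0 T0 := hlam_ii T0 hT0_nonneg
          have hlam2 : IntervalIntegrable lam volume T0 T := by
            refine (hlam_ii T hT_nonneg).mono_set ?_
            rw [uIcc_of_le hT, uIcc_of_le hT_nonneg]
            exact Icc_subset_Icc hT0_nonneg le_rfl
          have hgk2 : IntervalIntegrable (g k) volume T0 T := by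
            refine (hg_ii k T hT_nonneg).mono_set ?_
            rw [uIcc_of_le hT, uIcc_of_le hT_nonneg]
            exact Icc_subset_Icc hT0_nonneg le_rfl
          have hmono : ∫ s in T0..T, (L / 2) * lam s ≤ ∫ s in T0..T, g k s := by
            refine intervalIntegral.integral_mono_on hT
              (hlam2.const_mul _) hgk2 fun s hs => ?_
            have hs0 : (0:ℝ) ≤ s := hT0_nonneg.trans hs.1
            have hfs : L / 2 ≤ f k s := (hT0 s hs.1).1
            have h1 : L / 2 * lam s ≤ f k s * lam s :=
              mul_le_mul_of_nonneg_right hfs (hlam_nonneg s)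
            have h2 : 0 ≤ mu s * k * f k s := by
              have h3 := hf_nonneg k s hs0
              have h4 := hmu_nonneg s
              positivity
            simp only [hg_def]
            nlinarith
          have hsum : (∫ s in (0:ℝ)..T0, g k s) + ∫ s in T0..T, g k s
              = ∫ s in (0:ℝ)..T, g k s :=
            intervalIntegral.integral_add_adjacent_intervals (hg_ii k T0 hT0_nonneg) hgk2
          have hpos0 : 0 ≤ ∫ s in (0:ℝ)..T0, g k s := by
            refine intervalIntegral.integral_nonneg hT0_nonneg fun s hs => ?_
            exact hg_nonneg k s hs.1
          have hgle : ∫ s in T0..T, g k s ≤ 1 := by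
            have h5 := hbdd k T hT_nonneg
            linarith
          have hc : ∫ s in T0..T, (L / 2) * lam s = (L / 2) * ∫ s in T0..T, lam s :=
            intervalIntegral.integral_const_mul _ _
          have hlamsum : (∫ s in (0:ℝ)..T0, lam s) + ∫ s in T0..T, lam s
              = ∫ s in (0:ℝ)..T, lam s :=
            intervalIntegral.integral_add_adjacent_intervals hlam1 hlam2
          have hlamT0T : ∫ s in T0..T, lam s ≤ 2 / L := by
            rw [hc] at hmono
            rw [le_div_iff₀ hLpos]
            nlinarith
          linarith
        have hev2 : ∀ᶠ T in atTop,
            (∫ s in (0:ℝ)..T0, lam s) + 2 / L < ∫ s in (0:ℝ)..T, lam s :=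
          hlam_nonint.eventually (eventually_gt_atTop _)
        obtain ⟨T, hT1, hT2⟩ := (hev2.and (eventually_ge_atTop T0)).exists
        exact absurd (hkey T hT2) (not_le.mpr hT1)
      rw [hL_zero] at hFk1
      exact hFk1
  intro k hk
  obtain ⟨m, rfl⟩ : ∃ m, k = m + 1 := ⟨k - 1, (Nat.succ_pred_eq_of_pos hk).symm⟩
  have hsub : m + 1 - 1 = m := rfl
  have hcast : ((m + 1 : ℕ) : ℝ) - 1 = (m : ℝ) := by push_cast; ring
  constructor
  · intro t ht
    rw [hsub, hcast]
    exact hg_nonneg m t ht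
  · have h1 : Tendsto (F (m + 1)) atTop (nhds (1 - ∫ s in Ioi (0:ℝ), g m s)) := hFlim m
    have h2 : Tendsto (F (m + 1)) atTop (nhds 0) := hFzero (m + 1)
    have h3 : 1 - ∫ s in Ioi (0:ℝ), g m s = 0 := tendsto_nhds_unique h1 h2
    have h4 : ∫ s in Ioi (0:ℝ), g m s = 1 := by linarith
    have h5 : (fun t => (lam t + mu t * (((m + 1 : ℕ) : ℝ) - 1)) * f (m + 1 - 1) t)
        = g m := by
      funext t; rw [hsub, hcast]
    calc ∫ t in Set.Ici (0:ℝ), (lam t + mu t * (((m+1:ℕ) : ℝ) - 1)) * f (m + 1 - 1) t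
        = ∫ t in Set.Ici (0:ℝ), g m t := by rw [h5]
      _ = ∫ t in Set.Ioi (0:ℝ), g m t := integral_Ici_eq_integral_Ioi
      _ = 1 := h4
end

section
/- Assume λ ∉ L¹(ℝ₊). Then for each k ≥ 2 the function g_{k−1,k}(s,t) = (λ(s)+μ(s)(k−2))(λ(t)+μ(t)(k−1)) e^{−(Λ(t)−Λ(s))−(M(t)−M(s))(k−1)} f(k−2,s) for t>s (and 0 for t<s) is a probability density on ℝ₊², i.e., it is nonnegative and its double integral equals 1. -/
open MeasureTheory Real Filter Set
open scoped ENNReal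

lemma aux_intOn (g : ℝ → ℝ) (hg : Measurable g) (hgn : ∀ t, 0 ≤ g t)
    (hbdd : ∀ t > 0, ∃ C, ∀ s ∈ Set.Icc (0:ℝ) t, g s ≤ C) (T : ℝ) :
    IntegrableOn g (Set.Icc 0 T) := by
  obtain ⟨C, hC⟩ := hbdd (max T 1) (by positivity)
  have h1 : IntegrableOn g (Set.Icc 0 (max T 1)) := by
    refine Measure.integrableOn_of_bounded (M := C) ?_ hg.aestronglyMeasurable ?_
    · rw [Real.volume_Icc]; exact ENNReal.ofReal_ne_top
    · refine (ae_restrict_iff' measurableSet_Icc).mpr (Filter.Eventually.of_forall fun a ha => ?_)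
      rw [Real.norm_eq_abs, abs_of_nonneg (hgn a)]
      exact hC a ha
  exact h1.mono_set (Icc_subset_Icc_right (le_max_left T 1))

lemma key_exp_integral (h : ℝ → ℝ) (hmeas : Measurable h) (hnn : ∀ t, 0 ≤ h t)
    (hint : ∀ a b : ℝ, IntervalIntegrable h volume a b) (s : ℝ)
    (htop : Tendsto (fun t => ∫ r in s..t, h r) atTop atTop) :
    ∫ t in Ioi s, h t * Real.exp (-(∫ r in s..t, h r)) = 1 := by
  set F : ℝ → ℝ := fun t => ∫ r in s..t, h r with hFdef
  have hFcont : Continuous F := intervalIntegral.continuous_primitive hint s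
  have hFs : F s = 0 := by simp [hFdef]
  have hFdiff : ∀ a b : ℝ, F b - F a = ∫ r in a..b, h r := by
    intro a b
    have h1 : F a + ∫ r in a..b, h r = F b :=
      intervalIntegral.integral_add_adjacent_intervals (hint s a) (hint a b)
    linarith
  have hFmono : Monotone F := by
    intro a b hab
    have h1 := hFdiff a b
    have h2 : 0 ≤ ∫ r in a..b, h r :=
      intervalIntegral.integral_nonneg hab (fun x _ => hnn x)
    linarith
  set Φ : ℝ → ℝ → ℝ≥0∞ := fun t u =>
    if F t < u then ENNReal.ofReal (h t * Real.exp (-u)) else 0 with hΦdef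
  have hexpInt : ∀ a : ℝ, ∫⁻ u in Ioi a, ENNReal.ofReal (Real.exp (-u))
      = ENNReal.ofReal (Real.exp (-a)) := by
    intro a
    rw [← ofReal_integral_eq_lintegral_ofReal]
    · rw [integral_exp_neg_Ioi]
    · exact (by simpa using exp_neg_integrableOn_Ioi a one_pos : IntegrableOn (fun x => rexp (-x)) (Ioi a))
    · exact Filter.Eventually.of_forall fun x => (Real.exp_pos _).le
  have stepA : ∀ t, s < t →
      ENNReal.ofReal (h t * Real.exp (-(F t))) = ∫⁻ u in Ioi 0, Φ t u := by
    intro t ht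
    have hFt : 0 ≤ F t := by
      have := hFmono ht.le; rw [hFs] at this; exact this
    have heq : ∀ u, Φ t u = (Ioi (F t)).indicator
        (fun u => ENNReal.ofReal (h t) * ENNReal.ofReal (Real.exp (-u))) u := by
      intro u
      simp [hΦdef, Set.indicator_apply, mem_Ioi, ENNReal.ofReal_mul (hnn t)]
    simp only [heq]
    rw [lintegral_indicator measurableSet_Ioi, Measure.restrict_restrict measurableSet_Ioi]
    have hss : Ioi (F t) ∩ Ioi (0:ℝ) = Ioi (F t) := by
      rw [Set.Ioi_inter_Ioi, max_eq_left hFt]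
    have hm : Measurable fun u : ℝ => ENNReal.ofReal (Real.exp (-u)) :=
      Measurable.ennreal_ofReal (by fun_prop)
    rw [hss, lintegral_const_mul _ hm, hexpInt (F t), ← ENNReal.ofReal_mul (hnn t)]
  have stepC : ∀ u : ℝ, 0 < u →
      ∫⁻ t in Ioi s, Φ t u = ENNReal.ofReal (Real.exp (-u) * u) := by
    intro u hu
    obtain ⟨X, hX⟩ := (htop.eventually_ge_atTop u).exists
    set S := {t : ℝ | u ≤ F t} with hS
    have hSne : S.Nonempty := ⟨X, hX⟩
    have hSbdd : BddBelow S := ⟨s, fun t htS => by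
      by_contra hts
      push_neg at hts
      have h1 : F t ≤ 0 := by
        have := hFmono hts.le; rw [hFs] at this; exact this
      have h2 : u ≤ F t := htS
      linarith⟩
    have hScl : IsClosed S := isClosed_le continuous_const hFcont
    set b := sInf S with hb
    have hbS : b ∈ S := hScl.csInf_mem hSne hSbdd
    have hub : u ≤ F b := hbS
    have hsb : s < b := by
      rcases lt_or_ge s b with hc | hc
      · exact hc
      · exfalso
        have := hFmono hc
        rw [hFs] at this
        linarith
    have hlt : ∀ t, t < b → F t < u := by
      intro t htb
      by_contra hge
      push_neg at hge
      exact absurd (csInf_le hSbdd hge) (not_le.mpr htb)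
    have hFb : F b = u := by
      refine le_antisymm ?_ hub
      have htnd : Tendsto F (nhdsWithin b (Iio b)) (nhds (F b)) :=
        (hFcont.tendsto b).mono_left nhdsWithin_le_nhds
      exact le_of_tendsto htnd (eventually_nhdsWithin_of_forall fun x hx => (hlt x hx).le)
    have hset : {t : ℝ | F t < u} ∩ Ioi s = Ioo s b := by
      ext t
      simp only [mem_inter_iff, mem_setOf_eq, mem_Ioi, mem_Ioo]
      constructor
      · rintro ⟨hFu, hst⟩
        refine ⟨hst, ?_⟩
        by_contra hbt
        push_neg at hbt
        have := hFmono hbt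
        linarith
      · rintro ⟨hst, htb⟩
        exact ⟨hlt t htb, hst⟩
    have hΦ' : ∀ t, Φ t u = ({t : ℝ | F t < u}).indicator
        (fun t => ENNReal.ofReal (h t) * ENNReal.ofReal (Real.exp (-u))) t := by
      intro t
      simp [hΦdef, Set.indicator_apply, ENNReal.ofReal_mul (hnn t)]
    have hmeasset : MeasurableSet {t : ℝ | F t < u} :=
      measurableSet_lt hFcont.measurable measurable_const
    calc ∫⁻ t in Ioi s, Φ t u
        = ∫⁻ t in {t : ℝ | F t < u} ∩ Ioi s,
            ENNReal.ofReal (h t) * ENNReal.ofReal (Real.exp (-u)) := by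
          simp only [hΦ']
          rw [lintegral_indicator hmeasset, Measure.restrict_restrict hmeasset]
      _ = (∫⁻ t in Ioo s b, ENNReal.ofReal (h t)) * ENNReal.ofReal (Real.exp (-u)) := by
          rw [hset, lintegral_mul_const _ hmeas.ennreal_ofReal]
      _ = ENNReal.ofReal u * ENNReal.ofReal (Real.exp (-u)) := by
          congr 1
          rw [← ofReal_integral_eq_lintegral_ofReal]
          · congr 1
            rw [← integral_Ioc_eq_integral_Ioo, ← intervalIntegral.integral_of_le hsb.le]
            exact hFb
          · exact ((intervalIntegrable_iff_integrableOn_Ioc_of_le hsb.le).mp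
              (hint s b)).mono_set Ioo_subset_Ioc_self
          · exact Filter.Eventually.of_forall fun x => hnn x
      _ = ENNReal.ofReal (Real.exp (-u) * u) := by
          rw [ENNReal.ofReal_mul (Real.exp_pos _).le, mul_comm]
  have hΦmeas : Measurable (Function.uncurry Φ) := by
    have hm1 : Measurable fun p : ℝ × ℝ => ENNReal.ofReal (h p.1 * Real.exp (-p.2)) :=
      ((hmeas.comp measurable_fst).mul
        (Real.measurable_exp.comp measurable_snd.neg)).ennreal_ofReal
    exact Measurable.ite
      (measurableSet_lt (hFcont.measurable.comp measurable_fst) measurable_snd)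
      hm1 measurable_const
  have hlint : ∫⁻ t in Ioi s, ENNReal.ofReal (h t * Real.exp (-(F t))) = 1 := by
    calc ∫⁻ t in Ioi s, ENNReal.ofReal (h t * Real.exp (-(F t)))
        = ∫⁻ t in Ioi s, ∫⁻ u in Ioi 0, Φ t u :=
          setLIntegral_congr_fun measurableSet_Ioi
            (fun t ht => stepA t ht)
      _ = ∫⁻ u in Ioi 0, ∫⁻ t in Ioi s, Φ t u :=
          lintegral_lintegral_swap hΦmeas.aemeasurable
      _ = ∫⁻ u in Ioi 0, ENNReal.ofReal (Real.exp (-u) * u) :=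
          setLIntegral_congr_fun measurableSet_Ioi
            (fun u hu => stepC u hu)
      _ = ENNReal.ofReal (∫ u in Ioi 0, Real.exp (-u) * u) := by
          rw [ofReal_integral_eq_lintegral_ofReal]
          · have h2 := Real.GammaIntegral_convergent (s := 2) (by norm_num)
            exact (by simpa [show (2:ℝ) - 1 = 1 by norm_num, Real.rpow_one] using h2 :
              IntegrableOn (fun x => rexp (-x) * x) (Ioi 0))
          · exact (ae_restrict_iff' measurableSet_Ioi).mpr
              (Filter.Eventually.of_forall fun x hx =>
                mul_nonneg (Real.exp_pos _).le (le_of_lt hx))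
      _ = 1 := by
          have h1 : Real.Gamma 2 = ∫ u in Ioi 0, Real.exp (-u) * u := by
            rw [Real.Gamma_eq_integral (by norm_num : (0:ℝ) < 2)]
            simp [show (2:ℝ) - 1 = 1 by norm_num, Real.rpow_one]
          rw [← h1, Real.Gamma_two, ENNReal.ofReal_one]
  show ∫ t in Ioi s, h t * Real.exp (-(F t)) = 1
  rw [integral_eq_lintegral_of_nonneg_ae (f := fun t => h t * Real.exp (-(F t)))
    (Filter.Eventually.of_forall fun t => mul_nonneg (hnn t) (Real.exp_pos _).le)
    (hmeas.mul (Real.measurable_exp.comp hFcont.measurable.neg)).aestronglyMeasurable,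
    hlint, ENNReal.toReal_one]


/-- if `lam ∉ L¹(ℝ₊)`, the joint density `g_{k−1,k}` of
`(T_{k−1}, T_k)` is a probability density on `ℝ₊²`. -/
theorem stmt13 (lam mu : ℝ → ℝ) (f : ℕ → ℝ → ℝ)
    (hlam_nonneg : ∀ t, 0 ≤ lam t) (hmu_nonneg : ∀ t, 0 ≤ mu t)
    (hlam_meas : Measurable lam) (hmu_meas : Measurable mu)
    (hlam_bdd : ∀ t > 0, ∃ C, ∀ s ∈ Set.Icc (0:ℝ) t, lam s ≤ C)
    (hmu_bdd : ∀ t > 0, ∃ C, ∀ s ∈ Set.Icc (0:ℝ) t, mu s ≤ C)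
    (Λ M : ℝ → ℝ)
    (hΛ : ∀ t, Λ t = ∫ r in (0:ℝ)..t, lam r)
    (hM : ∀ t, M t = ∫ r in (0:ℝ)..t, mu r)
    (hlam_nonint : Filter.Tendsto Λ Filter.atTop Filter.atTop)
    (hf_nonneg : ∀ (n : ℕ) (t : ℝ), 0 ≤ t → 0 ≤ f n t)
    (hf_meas : ∀ n : ℕ, Measurable (f n))
    (k : ℕ) (hk : 2 ≤ k)
    (hprev : ∫ s in Set.Ici (0:ℝ), (lam s + mu s * ((k : ℝ) - 2)) * f (k - 2) s = 1)
    (G : ℝ → ℝ → ℝ)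
    (hG : ∀ s t : ℝ, G s t =
      if s < t then
        (lam s + mu s * ((k : ℝ) - 2)) * (lam t + mu t * ((k : ℝ) - 1)) *
          Real.exp (-(Λ t - Λ s) - (M t - M s) * ((k : ℝ) - 1)) * f (k - 2) s
      else 0) :
    (∀ s t : ℝ, 0 ≤ s → 0 ≤ t → 0 ≤ G s t)
      ∧ ∫ s in Set.Ici (0:ℝ), ∫ t in Set.Ici (0:ℝ), G s t = 1 := by

  have hk2 : (2:ℝ) ≤ (k:ℝ) := by exact_mod_cast hk
  -- nonnegativity
  have hnonneg : ∀ s t : ℝ, 0 ≤ s → 0 ≤ t → 0 ≤ G s t := by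
    intro s t hs ht
    rw [hG]
    split
    · have h1 : 0 ≤ lam s + mu s * ((k:ℝ) - 2) :=
        add_nonneg (hlam_nonneg s) (mul_nonneg (hmu_nonneg s) (by linarith))
      have h2 : 0 ≤ lam t + mu t * ((k:ℝ) - 1) :=
        add_nonneg (hlam_nonneg t) (mul_nonneg (hmu_nonneg t) (by linarith))
      have h3 := hf_nonneg (k - 2) s hs
      positivity
    · exact le_refl 0
  refine ⟨hnonneg, ?_⟩
  set h0 : ℝ → ℝ := fun t => lam t + mu t * ((k:ℝ) - 1) with hh0def
  have h0meas : Measurable h0 := hlam_meas.add (hmu_meas.mul_const _)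
  have h0nn : ∀ t, 0 ≤ h0 t := fun t =>
    add_nonneg (hlam_nonneg t) (mul_nonneg (hmu_nonneg t) (by linarith))
  -- interval integrability on nonnegative intervals
  have hsubIcc : ∀ a b : ℝ, 0 ≤ a → 0 ≤ b → Set.uIoc a b ⊆ Set.Icc 0 (max a b) := by
    intro a b ha hb x hx
    rw [Set.mem_uIoc] at hx
    rcases hx with ⟨h1, h2⟩ | ⟨h1, h2⟩
    · exact ⟨le_trans ha h1.le, le_trans h2 (le_max_right a b)⟩
    · exact ⟨le_trans hb h1.le, le_trans h2 (le_max_left a b)⟩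
  have hIlam : ∀ a b : ℝ, 0 ≤ a → 0 ≤ b → IntervalIntegrable lam volume a b := by
    intro a b ha hb
    rw [intervalIntegrable_iff]
    exact (aux_intOn lam hlam_meas hlam_nonneg hlam_bdd (max a b)).mono_set (hsubIcc a b ha hb)
  have hImu : ∀ a b : ℝ, 0 ≤ a → 0 ≤ b → IntervalIntegrable mu volume a b := by
    intro a b ha hb
    rw [intervalIntegrable_iff]
    exact (aux_intOn mu hmu_meas hmu_nonneg hmu_bdd (max a b)).mono_set (hsubIcc a b ha hb)
  have hIh0 : ∀ a b : ℝ, 0 ≤ a → 0 ≤ b → IntervalIntegrable h0 volume a b := by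
    intro a b ha hb
    exact (hIlam a b ha hb).add ((hImu a b ha hb).mul_const _)
  -- difference formulas
  have hΛdiff : ∀ a b : ℝ, 0 ≤ a → 0 ≤ b → Λ b - Λ a = ∫ r in a..b, lam r := by
    intro a b ha hb
    have h1 : (∫ r in (0:ℝ)..a, lam r) + ∫ r in a..b, lam r = ∫ r in (0:ℝ)..b, lam r :=
      intervalIntegral.integral_add_adjacent_intervals (hIlam 0 a le_rfl ha) (hIlam a b ha hb)
    rw [hΛ a, hΛ b]; linarith
  have hMdiff : ∀ a b : ℝ, 0 ≤ a → 0 ≤ b → M b - M a = ∫ r in a..b, mu r := by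
    intro a b ha hb
    have h1 : (∫ r in (0:ℝ)..a, mu r) + ∫ r in a..b, mu r = ∫ r in (0:ℝ)..b, mu r :=
      intervalIntegral.integral_add_adjacent_intervals (hImu 0 a le_rfl ha) (hImu a b ha hb)
    rw [hM a, hM b]; linarith
  have hF0 : ∀ s t : ℝ, 0 ≤ s → s ≤ t →
      (∫ r in s..t, h0 r) = (Λ t - Λ s) + (M t - M s) * ((k:ℝ) - 1) := by
    intro s t hs hst
    have ht0 : 0 ≤ t := hs.trans hst
    rw [hh0def]
    rw [intervalIntegral.integral_add (hIlam s t hs ht0) ((hImu s t hs ht0).mul_const _),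
      intervalIntegral.integral_mul_const, ← hΛdiff s t hs ht0, ← hMdiff s t hs ht0]
  -- inner integral
  have hinner : ∀ s : ℝ, 0 ≤ s →
      (∫ t in Set.Ici (0:ℝ), G s t) = (lam s + mu s * ((k:ℝ) - 2)) * f (k - 2) s := by
    intro s hs
    set h' : ℝ → ℝ := (Set.Ici s).indicator h0 with hh'def
    have h'meas : Measurable h' := h0meas.indicator measurableSet_Ici
    have h'nn : ∀ t, 0 ≤ h' t := fun t => Set.indicator_nonneg (fun x _ => h0nn x) t
    have h'val : ∀ t, s ≤ t → h' t = h0 t := fun t ht => Set.indicator_of_mem ht h0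
    have h'int : ∀ a b : ℝ, IntervalIntegrable h' volume a b := by
      intro a b
      rw [intervalIntegrable_iff, hh'def, IntegrableOn,
        integrable_indicator_iff measurableSet_Ici, IntegrableOn,
        Measure.restrict_restrict measurableSet_Ici]
      have hsub : Set.Ici s ∩ Set.uIoc a b ⊆ Set.Icc 0 (max a b) := by
        intro x hx
        obtain ⟨hx1, hx2⟩ := hx
        rw [Set.mem_uIoc] at hx2
        refine ⟨le_trans hs hx1, ?_⟩
        rcases hx2 with ⟨_, h2⟩ | ⟨_, h2⟩
        · exact le_trans h2 (le_max_right a b)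
        · exact le_trans h2 (le_max_left a b)
      exact (aux_intOn h0 h0meas h0nn
        (fun T hT => by
          obtain ⟨C1, hC1⟩ := hlam_bdd T hT
          obtain ⟨C2, hC2⟩ := hmu_bdd T hT
          exact ⟨C1 + (max C2 0) * ((k:ℝ) - 1), fun x hx => by
            have := hC1 x hx
            have h2 := hC2 x hx
            have h3 : mu x * ((k:ℝ) - 1) ≤ max C2 0 * ((k:ℝ) - 1) :=
              mul_le_mul_of_nonneg_right (le_trans h2 (le_max_left _ _)) (by linarith)
            simp only [hh0def]
            linarith⟩) (max a b)).mono_set hsub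
    have h'eq : ∀ t, s ≤ t → (∫ r in s..t, h' r) = ∫ r in s..t, h0 r := by
      intro t hst
      rw [intervalIntegral.integral_of_le hst, intervalIntegral.integral_of_le hst]
      refine setIntegral_congr_fun measurableSet_Ioc fun x hx => ?_
      exact Set.indicator_of_mem (le_of_lt hx.1) h0
    have htop' : Tendsto (fun t => ∫ r in s..t, h' r) atTop atTop := by
      refine tendsto_atTop_mono' atTop ?_ ?_ (f₁ := fun t => Λ t + -Λ s)
      · filter_upwards [eventually_ge_atTop s] with t hst
        have ht0 : 0 ≤ t := hs.trans hst
        rw [h'eq t hst, hF0 s t hs hst]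
        have hMnn : 0 ≤ M t - M s := by
          rw [hMdiff s t hs ht0]
          exact intervalIntegral.integral_nonneg hst (fun x _ => hmu_nonneg x)
        nlinarith
      · exact tendsto_atTop_add_const_right atTop _ hlam_nonint
    have hkey : ∫ t in Ioi s, h' t * Real.exp (-(∫ r in s..t, h' r)) = 1 :=
      key_exp_integral h' h'meas h'nn h'int s htop'
    have hGind : ∀ t : ℝ, G s t = (Set.Ioi s).indicator (G s) t := by
      intro t
      rcases lt_or_ge s t with hst | hst
      · rw [Set.indicator_of_mem (show t ∈ Set.Ioi s from hst)]
      · rw [Set.indicator_of_notMem (by simpa using hst), hG, if_neg (not_lt.mpr hst)]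
    calc ∫ t in Set.Ici (0:ℝ), G s t
        = ∫ t in Set.Ici (0:ℝ), (Set.Ioi s).indicator (G s) t :=
          setIntegral_congr_fun measurableSet_Ici fun t _ => hGind t
      _ = ∫ t in Set.Ioi s ∩ Set.Ici (0:ℝ), G s t := by
          rw [integral_indicator measurableSet_Ioi,
            Measure.restrict_restrict measurableSet_Ioi]
      _ = ∫ t in Set.Ioi s, G s t := by
          have hiseq : Set.Ioi s ∩ Set.Ici (0:ℝ) = Set.Ioi s :=
            Set.inter_eq_left.mpr (fun x hx => le_trans hs (le_of_lt hx))
          rw [hiseq]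
      _ = ∫ t in Set.Ioi s, ((lam s + mu s * ((k:ℝ) - 2)) * f (k - 2) s) *
            (h' t * Real.exp (-(∫ r in s..t, h' r))) := by
          refine setIntegral_congr_fun measurableSet_Ioi fun t ht => ?_
          have hst : s < t := ht
          rw [hG, if_pos hst, h'eq t hst.le, hF0 s t hs hst.le, h'val t hst.le]
          rw [show -(Λ t - Λ s) - (M t - M s) * ((k:ℝ) - 1)
            = -((Λ t - Λ s) + (M t - M s) * ((k:ℝ) - 1)) by ring]
          rw [hh0def]
          ring
      _ = ((lam s + mu s * ((k:ℝ) - 2)) * f (k - 2) s) *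
            ∫ t in Ioi s, h' t * Real.exp (-(∫ r in s..t, h' r)) :=
          integral_const_mul _ _
      _ = (lam s + mu s * ((k:ℝ) - 2)) * f (k - 2) s := by rw [hkey, mul_one]
  calc ∫ s in Set.Ici (0:ℝ), ∫ t in Set.Ici (0:ℝ), G s t
      = ∫ s in Set.Ici (0:ℝ), (lam s + mu s * ((k:ℝ) - 2)) * f (k - 2) s :=
        setIntegral_congr_fun measurableSet_Ici fun s hs => hinner s hs
    _ = 1 := hprev
end
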